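/- arXiv:1802.01150 — 5 statements merged into one kernel-verified Lean document; each statement's English description precedes it below -/
import Mathlib

section
/- Suppose A ∈ GL_d(C(z)) has a φ-minimal irreducible pole q, n := -ord_q(A) > 0, and the value at q of qⁿ·A has the block form (A₁ | 0) where the d×r matrix A₁ has rank r over C[z]/⟨q⟩. If T ∈ GL_d(C(z)) ∩ Mat_d(C[z]) satisfies ord_q(φ(T⁻¹)AT) > ord_q(A), then the first r rows of T are divisible by q; equivalently T = D·T̃ with D = diag(q,...,q,1,...,1) (r copies of q) and T̃ a polynomial matrix. -/
open Polynomial Matrix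

noncomputable section
open scoped Classical

variable {K : Type*} [Field K]

/-- The order (q-adic valuation) of a rational function at an irreducible polynomial `q`. -/
def ordAt (q : Polynomial K) (f : RatFunc K) : WithTop ℤ :=
  if f = 0 then ⊤ else ((multiplicity q f.num : ℤ) - (multiplicity q f.denom : ℤ) : ℤ)

/-- The order at `q` of a matrix: the minimum of the orders of its entries. -/
def matOrdAt {d : ℕ} (q : Polynomial K) (A : Matrix (Fin d) (Fin d) (RatFunc K)) : WithTop ℤ :=
  (Finset.univ : Finset (Fin d × Fin d)).inf fun ij => ordAt q (A ij.1 ij.2)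

/-- The value of a rational function at an irreducible `q` (reduction modulo `q`),
junk value `0` if the function has a pole at `q`. -/
def piAt (q : Polynomial K) (hq : Irreducible q) (f : RatFunc K) : AdjoinRoot q :=
  letI : Fact (Irreducible q) := ⟨hq⟩
  AdjoinRoot.mk q f.num * (AdjoinRoot.mk q f.denom)⁻¹

/-- Entrywise reduction of a matrix modulo `q`. -/
def matPiAt {d : ℕ} (q : Polynomial K) (hq : Irreducible q)
    (A : Matrix (Fin d) (Fin d) (RatFunc K)) : Matrix (Fin d) (Fin d) (AdjoinRoot q) :=
  Matrix.of fun i j => piAt q hq (A i j)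

/-- The leading matrix of `A` at `q`: the value at `q` of `q^n • A` where `n = -ord_q(A)`. -/
def lcAt {d : ℕ} (q : Polynomial K) (hq : Irreducible q) (n : ℤ)
    (A : Matrix (Fin d) (Fin d) (RatFunc K)) : Matrix (Fin d) (Fin d) (AdjoinRoot q) :=
  matPiAt q hq (Matrix.of fun i j => algebraMap (Polynomial K) (RatFunc K) q ^ n * A i j)

/-- `φ^j` applied to a polynomial: `q(z) ↦ q(z + j)`. -/
def shiftPoly (j : ℕ) (q : Polynomial K) : Polynomial K :=
  q.comp (X + C (j : K))

/-- A common denominator of the entries of a matrix over `C(z)`. -/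
def denMat {d : ℕ} (A : Matrix (Fin d) (Fin d) (RatFunc K)) : Polynomial K :=
  ∏ i, ∏ j, (A i j).denom

/-- `q` is a φ-minimal pole of `A`: `q` divides the denominator of `A`, but no
forward shift `φ^j(q)` (`j ≥ 1`) does. -/
def PhiMinimalPole {d : ℕ} (q : Polynomial K) (A : Matrix (Fin d) (Fin d) (RatFunc K)) : Prop :=
  q ∣ denMat A ∧ ∀ j : ℕ, 1 ≤ j → ¬ shiftPoly j q ∣ denMat A

/-- The φ-dispersion of `A` at `q`: the largest `ℓ ≥ 1` with `φ^ℓ(q) ∣ num(det A)` (0 if none). -/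
def phiDispersion {d : ℕ} (q : Polynomial K) (A : Matrix (Fin d) (Fin d) (RatFunc K)) : ℕ :=
  sSup {ℓ : ℕ | 0 < ℓ ∧ shiftPoly ℓ q ∣ (Matrix.det A).num}


namespace Stmt3Aux

variable (q : Polynomial K)

/-- `f` is `q`-integral: it admits a representation with denominator prime to `q`. -/
def IsIntAt (f : RatFunc K) : Prop :=
  ∃ p₁ p₂ : Polynomial K, ¬ q ∣ p₂ ∧
    f * algebraMap (Polynomial K) (RatFunc K) p₂ = algebraMap (Polynomial K) (RatFunc K) p₁

variable {q}

lemma not_dvd_one (hq : Irreducible q) : ¬ q ∣ (1 : Polynomial K) :=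
  fun h => hq.not_isUnit (isUnit_of_dvd_one h)

lemma isIntAt_algebraMap (hq : Irreducible q) (p : Polynomial K) :
    IsIntAt q (algebraMap (Polynomial K) (RatFunc K) p) :=
  ⟨p, 1, not_dvd_one hq, by simp⟩

lemma isIntAt_zero (hq : Irreducible q) : IsIntAt q (0 : RatFunc K) :=
  ⟨0, 1, not_dvd_one hq, by simp⟩

lemma IsIntAt.mul (hq : Irreducible q) {f g : RatFunc K} (hf : IsIntAt q f)
    (hg : IsIntAt q g) : IsIntAt q (f * g) := by
  obtain ⟨a, s, hs, hfs⟩ := hf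
  obtain ⟨b, t, ht, hgt⟩ := hg
  have hqp : Prime q := UniqueFactorizationMonoid.irreducible_iff_prime.mp hq
  refine ⟨a * b, s * t, fun h => ?_, ?_⟩
  · rcases hqp.2.2 s t h with h' | h' <;> [exact hs h'; exact ht h']
  · rw [_root_.map_mul, _root_.map_mul]
    linear_combination (g * algebraMap (Polynomial K) (RatFunc K) t) * hfs +
      (algebraMap (Polynomial K) (RatFunc K) a) * hgt

lemma IsIntAt.add (hq : Irreducible q) {f g : RatFunc K} (hf : IsIntAt q f)
    (hg : IsIntAt q g) : IsIntAt q (f + g) := by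
  obtain ⟨a, s, hs, hfs⟩ := hf
  obtain ⟨b, t, ht, hgt⟩ := hg
  have hqp : Prime q := UniqueFactorizationMonoid.irreducible_iff_prime.mp hq
  refine ⟨a * t + b * s, s * t, fun h => ?_, ?_⟩
  · rcases hqp.2.2 s t h with h' | h' <;> [exact hs h'; exact ht h']
  · rw [_root_.map_mul, _root_.map_add, _root_.map_mul, _root_.map_mul]
    linear_combination (algebraMap (Polynomial K) (RatFunc K) t) * hfs +
      (algebraMap (Polynomial K) (RatFunc K) s) * hgt

lemma piAt_zero (hq : Irreducible q) : piAt q hq (0 : RatFunc K) = 0 := by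
  haveI : Fact (Irreducible q) := ⟨hq⟩
  show AdjoinRoot.mk q (RatFunc.num 0) * (AdjoinRoot.mk q (RatFunc.denom 0))⁻¹ = 0
  rw [RatFunc.num_zero, _root_.map_zero, zero_mul]

lemma piAt_spec (hq : Irreducible q) (f : RatFunc K) (hden : ¬ q ∣ f.denom) :
    AdjoinRoot.mk q f.denom * piAt q hq f = AdjoinRoot.mk q f.num := by
  haveI : Fact (Irreducible q) := ⟨hq⟩
  have h : AdjoinRoot.mk q f.denom ≠ 0 := by rwa [Ne, AdjoinRoot.mk_eq_zero]
  show AdjoinRoot.mk q f.denom * (AdjoinRoot.mk q f.num * (AdjoinRoot.mk q f.denom)⁻¹)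
      = AdjoinRoot.mk q f.num
  field_simp

lemma piAt_eq_of (hq : Irreducible q) {f : RatFunc K} {p₁ p₂ : Polynomial K}
    (h2 : ¬ q ∣ p₂)
    (h : f * algebraMap (Polynomial K) (RatFunc K) p₂ = algebraMap (Polynomial K) (RatFunc K) p₁) :
    AdjoinRoot.mk q p₂ * piAt q hq f = AdjoinRoot.mk q p₁ := by
  haveI : Fact (Irreducible q) := ⟨hq⟩
  by_cases hf : f = 0
  · subst hf
    have h0 : algebraMap (Polynomial K) (RatFunc K) p₁ = 0 := by simpa using h.symm
    have hp1 : p₁ = 0 := (map_eq_zero_iff _ (RatFunc.algebraMap_injective K)).mp h0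
    rw [piAt_zero hq, hp1, _root_.map_zero, mul_zero]
  · have hD : algebraMap (Polynomial K) (RatFunc K) f.denom ≠ 0 :=
      RatFunc.algebraMap_ne_zero f.denom_ne_zero
    have hnum : f * algebraMap (Polynomial K) (RatFunc K) f.denom
        = algebraMap (Polynomial K) (RatFunc K) f.num := by
      calc f * algebraMap (Polynomial K) (RatFunc K) f.denom
          = (algebraMap (Polynomial K) (RatFunc K) f.num
              / algebraMap (Polynomial K) (RatFunc K) f.denom)
            * algebraMap (Polynomial K) (RatFunc K) f.denom := by rw [f.num_div_denom]
        _ = algebraMap (Polynomial K) (RatFunc K) f.num := div_mul_cancel₀ _ hD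
    have key : f.num * p₂ = f.denom * p₁ := by
      apply RatFunc.algebraMap_injective K
      rw [_root_.map_mul, _root_.map_mul, ← hnum, ← h]
      ring
    have hdvd : f.denom ∣ p₂ := by
      have hco : IsCoprime f.denom f.num := (RatFunc.isCoprime_num_denom f).symm
      exact hco.dvd_of_dvd_mul_left ⟨p₁, key⟩
    have hdq : ¬ q ∣ f.denom := fun hd => h2 (hd.trans hdvd)
    have hden0 : AdjoinRoot.mk q f.denom ≠ 0 := by rwa [Ne, AdjoinRoot.mk_eq_zero]
    have hspec := piAt_spec hq f hdq
    have hkey : AdjoinRoot.mk q f.num * AdjoinRoot.mk q p₂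
        = AdjoinRoot.mk q f.denom * AdjoinRoot.mk q p₁ := by
      have := congrArg (AdjoinRoot.mk q) key
      simpa [_root_.map_mul] using this
    apply mul_left_cancel₀ hden0
    calc AdjoinRoot.mk q f.denom * (AdjoinRoot.mk q p₂ * piAt q hq f)
        = AdjoinRoot.mk q p₂ * (AdjoinRoot.mk q f.denom * piAt q hq f) := by ring
      _ = AdjoinRoot.mk q p₂ * AdjoinRoot.mk q f.num := by rw [hspec]
      _ = AdjoinRoot.mk q f.denom * AdjoinRoot.mk q p₁ := by linear_combination hkey

lemma piAt_algebraMap (hq : Irreducible q) (p : Polynomial K) :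
    piAt q hq (algebraMap (Polynomial K) (RatFunc K) p) = AdjoinRoot.mk q p := by
  have := piAt_eq_of hq (not_dvd_one hq)
    (show algebraMap (Polynomial K) (RatFunc K) p * algebraMap (Polynomial K) (RatFunc K) 1
        = algebraMap (Polynomial K) (RatFunc K) p by simp)
  simpa using this

lemma piAt_mul (hq : Irreducible q) {f g : RatFunc K} (hf : IsIntAt q f) (hg : IsIntAt q g) :
    piAt q hq (f * g) = piAt q hq f * piAt q hq g := by
  haveI : Fact (Irreducible q) := ⟨hq⟩
  obtain ⟨a, s, hs, hfs⟩ := hf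
  obtain ⟨b, t, ht, hgt⟩ := hg
  have hqp : Prime q := UniqueFactorizationMonoid.irreducible_iff_prime.mp hq
  have hst : ¬ q ∣ s * t := fun h => by
    rcases hqp.2.2 s t h with h' | h' <;> [exact hs h'; exact ht h']
  have hrep : (f * g) * algebraMap (Polynomial K) (RatFunc K) (s * t)
      = algebraMap (Polynomial K) (RatFunc K) (a * b) := by
    rw [_root_.map_mul, _root_.map_mul]
    linear_combination (g * algebraMap (Polynomial K) (RatFunc K) t) * hfs +
      (algebraMap (Polynomial K) (RatFunc K) a) * hgt
  have h1 := piAt_eq_of hq hst hrep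
  have h2 := piAt_eq_of hq hs hfs
  have h3 := piAt_eq_of hq ht hgt
  have hs0 : AdjoinRoot.mk q s ≠ 0 := by rwa [Ne, AdjoinRoot.mk_eq_zero]
  have ht0 : AdjoinRoot.mk q t ≠ 0 := by rwa [Ne, AdjoinRoot.mk_eq_zero]
  have hst0 : AdjoinRoot.mk q (s * t) ≠ 0 := by
    rw [_root_.map_mul]; exact mul_ne_zero hs0 ht0
  apply mul_left_cancel₀ hst0
  rw [h1, _root_.map_mul (AdjoinRoot.mk q), _root_.map_mul (AdjoinRoot.mk q)]
  calc AdjoinRoot.mk q a * AdjoinRoot.mk q b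
      = (AdjoinRoot.mk q s * piAt q hq f) * (AdjoinRoot.mk q t * piAt q hq g) := by
        rw [h2, h3]
    _ = AdjoinRoot.mk q s * AdjoinRoot.mk q t * (piAt q hq f * piAt q hq g) := by ring

lemma piAt_add (hq : Irreducible q) {f g : RatFunc K} (hf : IsIntAt q f) (hg : IsIntAt q g) :
    piAt q hq (f + g) = piAt q hq f + piAt q hq g := by
  haveI : Fact (Irreducible q) := ⟨hq⟩
  obtain ⟨a, s, hs, hfs⟩ := hf
  obtain ⟨b, t, ht, hgt⟩ := hg
  have hqp : Prime q := UniqueFactorizationMonoid.irreducible_iff_prime.mp hq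
  have hst : ¬ q ∣ s * t := fun h => by
    rcases hqp.2.2 s t h with h' | h' <;> [exact hs h'; exact ht h']
  have hrep : (f + g) * algebraMap (Polynomial K) (RatFunc K) (s * t)
      = algebraMap (Polynomial K) (RatFunc K) (a * t + b * s) := by
    rw [_root_.map_mul, _root_.map_add, _root_.map_mul, _root_.map_mul]
    linear_combination (algebraMap (Polynomial K) (RatFunc K) t) * hfs +
      (algebraMap (Polynomial K) (RatFunc K) s) * hgt
  have h1 := piAt_eq_of hq hst hrep
  have h2 := piAt_eq_of hq hs hfs
  have h3 := piAt_eq_of hq ht hgt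
  have hs0 : AdjoinRoot.mk q s ≠ 0 := by rwa [Ne, AdjoinRoot.mk_eq_zero]
  have ht0 : AdjoinRoot.mk q t ≠ 0 := by rwa [Ne, AdjoinRoot.mk_eq_zero]
  have hst0 : AdjoinRoot.mk q (s * t) ≠ 0 := by
    rw [_root_.map_mul]; exact mul_ne_zero hs0 ht0
  apply mul_left_cancel₀ hst0
  rw [h1, _root_.map_add (AdjoinRoot.mk q), _root_.map_mul (AdjoinRoot.mk q), _root_.map_mul (AdjoinRoot.mk q)]
  calc AdjoinRoot.mk q a * AdjoinRoot.mk q t + AdjoinRoot.mk q b * AdjoinRoot.mk q s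
      = (AdjoinRoot.mk q s * piAt q hq f) * AdjoinRoot.mk q t
          + (AdjoinRoot.mk q t * piAt q hq g) * AdjoinRoot.mk q s := by rw [h2, h3]
    _ = AdjoinRoot.mk q s * AdjoinRoot.mk q t * (piAt q hq f + piAt q hq g) := by ring

lemma IsIntAt.sum (hq : Irreducible q) {ι : Type*} (s : Finset ι) (f : ι → RatFunc K)
    (h : ∀ i ∈ s, IsIntAt q (f i)) : IsIntAt q (∑ i ∈ s, f i) := by
  induction s using Finset.cons_induction with
  | empty => simpa using isIntAt_zero hq
  | cons i s his ih =>
    rw [Finset.sum_cons]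
    exact IsIntAt.add hq (h i (Finset.mem_cons_self i s))
      (ih fun j hj => h j (Finset.mem_cons_of_mem hj))

lemma piAt_sum (hq : Irreducible q) {ι : Type*} (s : Finset ι) (f : ι → RatFunc K)
    (h : ∀ i ∈ s, IsIntAt q (f i)) :
    piAt q hq (∑ i ∈ s, f i) = ∑ i ∈ s, piAt q hq (f i) := by
  induction s using Finset.cons_induction with
  | empty => simpa using piAt_zero hq
  | cons i s his ih =>
    rw [Finset.sum_cons, Finset.sum_cons,
      piAt_add hq (h i (Finset.mem_cons_self i s))
        (IsIntAt.sum hq s f fun j hj => h j (Finset.mem_cons_of_mem hj)),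
      ih fun j hj => h j (Finset.mem_cons_of_mem hj)]

lemma piAt_sum_mul (hq : Irreducible q) {ι : Type*} (s : Finset ι) (u v : ι → RatFunc K)
    (hu : ∀ k ∈ s, IsIntAt q (u k)) (hv : ∀ k ∈ s, IsIntAt q (v k)) :
    piAt q hq (∑ k ∈ s, u k * v k) = ∑ k ∈ s, piAt q hq (u k) * piAt q hq (v k) := by
  rw [piAt_sum hq s _ fun k hk => IsIntAt.mul hq (hu k hk) (hv k hk)]
  exact Finset.sum_congr rfl fun k hk => piAt_mul hq (hu k hk) (hv k hk)

/-- Multiplicity of the denominator is at most `n` when `ordAt ≥ -n`, strictly less when `>`. -/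
lemma mult_denom_le (hq : Irreducible q) {f : RatFunc K} (hf : f ≠ 0) {n : ℕ}
    (hord : (-(n : ℤ) : WithTop ℤ) ≤ ordAt q f) : multiplicity q f.denom ≤ n := by
  by_cases hdvd : q ∣ f.denom
  · have hnum : ¬ q ∣ f.num := by
      intro hn'
      exact hq.not_isUnit ((RatFunc.isCoprime_num_denom f).isUnit_of_dvd' hn' hdvd)
    have ha : multiplicity q f.num = 0 := multiplicity_eq_zero.mpr hnum
    rw [ordAt, if_neg hf, ha] at hord
    have : (-(n : ℤ)) ≤ ((0 : ℤ) - (multiplicity q f.denom : ℤ)) := by exact_mod_cast hord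
    omega
  · rw [multiplicity_eq_zero.mpr hdvd]; exact Nat.zero_le n

lemma mult_denom_lt (hq : Irreducible q) {f : RatFunc K} (hf : f ≠ 0) {n : ℕ} (hn0 : 0 < n)
    (hord : (-(n : ℤ) : WithTop ℤ) < ordAt q f) : multiplicity q f.denom < n := by
  by_cases hdvd : q ∣ f.denom
  · have hnum : ¬ q ∣ f.num := by
      intro hn'
      exact hq.not_isUnit ((RatFunc.isCoprime_num_denom f).isUnit_of_dvd' hn' hdvd)
    have ha : multiplicity q f.num = 0 := multiplicity_eq_zero.mpr hnum
    rw [ordAt, if_neg hf, ha] at hord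
    have : (-(n : ℤ)) < ((0 : ℤ) - (multiplicity q f.denom : ℤ)) := by exact_mod_cast hord
    omega
  · rw [multiplicity_eq_zero.mpr hdvd]; exact hn0

/-- The fundamental representation of `q^n * f` when the denominator multiplicity is `≤ n`. -/
lemma rep_of_le (hq : Irreducible q) {f : RatFunc K} (hf : f ≠ 0) {n : ℕ}
    (hmn : multiplicity q f.denom ≤ n) :
    ∃ d : Polynomial K, ¬ q ∣ d ∧
      (algebraMap (Polynomial K) (RatFunc K) q ^ n * f) * algebraMap (Polynomial K) (RatFunc K) d
        = algebraMap (Polynomial K) (RatFunc K) (q ^ (n - multiplicity q f.denom) * f.num) := by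
  set m := multiplicity q f.denom with hm
  have hfin : FiniteMultiplicity q f.denom :=
    FiniteMultiplicity.of_not_isUnit hq.not_isUnit f.denom_ne_zero
  obtain ⟨d, hd⟩ : q ^ m ∣ f.denom := pow_multiplicity_dvd q f.denom
  have hqd : ¬ q ∣ d := by
    rintro ⟨e, he⟩
    exact hfin.not_pow_dvd_of_multiplicity_lt (Nat.lt_succ_self m)
      ⟨e, by rw [hd, he, pow_succ]; ring⟩
  refine ⟨d, hqd, ?_⟩
  have hD : algebraMap (Polynomial K) (RatFunc K) f.denom ≠ 0 :=
    RatFunc.algebraMap_ne_zero f.denom_ne_zero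
  have hnum : f * algebraMap (Polynomial K) (RatFunc K) f.denom
      = algebraMap (Polynomial K) (RatFunc K) f.num := by
    calc f * algebraMap (Polynomial K) (RatFunc K) f.denom
        = (algebraMap (Polynomial K) (RatFunc K) f.num
            / algebraMap (Polynomial K) (RatFunc K) f.denom)
          * algebraMap (Polynomial K) (RatFunc K) f.denom := by rw [f.num_div_denom]
      _ = algebraMap (Polynomial K) (RatFunc K) f.num := div_mul_cancel₀ _ hD
  have hsplit : n = (n - m) + m := (Nat.sub_add_cancel hmn).symm
  rw [_root_.map_mul, _root_.map_pow]
  calc (algebraMap (Polynomial K) (RatFunc K) q ^ n * f) * algebraMap (Polynomial K) (RatFunc K) d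
      = algebraMap (Polynomial K) (RatFunc K) q ^ (n - m)
          * (f * (algebraMap (Polynomial K) (RatFunc K) q ^ m
              * algebraMap (Polynomial K) (RatFunc K) d)) := by
        conv_lhs => rw [hsplit, pow_add]
        ring
    _ = algebraMap (Polynomial K) (RatFunc K) q ^ (n - m)
          * (f * algebraMap (Polynomial K) (RatFunc K) f.denom) := by
        rw [← _root_.map_pow (algebraMap (Polynomial K) (RatFunc K)) q m, ← _root_.map_mul, ← hd]
    _ = algebraMap (Polynomial K) (RatFunc K) q ^ (n - m)
          * algebraMap (Polynomial K) (RatFunc K) f.num := by rw [hnum]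

lemma isIntAt_qpow_mul (hq : Irreducible q) {f : RatFunc K} {n : ℕ}
    (hord : (-(n : ℤ) : WithTop ℤ) ≤ ordAt q f) :
    IsIntAt q (algebraMap (Polynomial K) (RatFunc K) q ^ n * f) := by
  by_cases hf : f = 0
  · subst hf; rw [mul_zero]; exact isIntAt_zero hq
  · obtain ⟨d, hqd, hrep⟩ := rep_of_le hq hf (mult_denom_le hq hf hord)
    exact ⟨_, d, hqd, hrep⟩

lemma piAt_qpow_mul_eq_zero (hq : Irreducible q) {f : RatFunc K} {n : ℕ} (hn0 : 0 < n)
    (hord : (-(n : ℤ) : WithTop ℤ) < ordAt q f) :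
    piAt q hq (algebraMap (Polynomial K) (RatFunc K) q ^ n * f) = 0 := by
  haveI : Fact (Irreducible q) := ⟨hq⟩
  by_cases hf : f = 0
  · rw [hf, mul_zero]; exact piAt_zero hq
  · have hlt : multiplicity q f.denom < n := mult_denom_lt hq hf hn0 hord
    obtain ⟨d, hqd, hrep⟩ := rep_of_le hq hf hlt.le
    have h1 := piAt_eq_of hq hqd hrep
    have h0 : AdjoinRoot.mk q (q ^ (n - multiplicity q f.denom) * f.num) = 0 := by
      rw [_root_.map_mul, _root_.map_pow, AdjoinRoot.mk_self, zero_pow (by omega), zero_mul]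
    rw [h0] at h1
    have hd0 : AdjoinRoot.mk q d ≠ 0 := by rwa [Ne, AdjoinRoot.mk_eq_zero]
    exact (mul_eq_zero.mp h1).resolve_left hd0

lemma matOrdAt_le_ordAt {d : ℕ} (q : Polynomial K) (A : Matrix (Fin d) (Fin d) (RatFunc K))
    (i j : Fin d) : matOrdAt q A ≤ ordAt q (A i j) :=
  Finset.inf_le (Finset.mem_univ ((i, j) : Fin d × Fin d))

end Stmt3Aux

set_option maxHeartbeats 1600000 in
/-- shearing lemma — a desingularizing transformation has its first
`r` rows divisible by `q`, i.e. factors as `D·T̃`. -/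
theorem stmt3 (Cs : Subfield ℂ) {d : ℕ}
    (phi : RatFunc ↥Cs ≃+* RatFunc ↥Cs)
    (hphi : ∀ p : Polynomial ↥Cs, phi (algebraMap (Polynomial ↥Cs) (RatFunc ↥Cs) p)
        = algebraMap (Polynomial ↥Cs) (RatFunc ↥Cs) (p.comp (X + C 1)))
    (q : Polynomial ↥Cs) (hq : Irreducible q)
    (A : Matrix (Fin d) (Fin d) (RatFunc ↥Cs)) (hA : A.det ≠ 0)
    (hmin : PhiMinimalPole q A)
    (n : ℕ) (hn0 : 0 < n) (hn : matOrdAt q A = (-(n : ℤ) : ℤ))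
    (r : ℕ) (hr : r ≤ d)
    (hblock : ∀ i j : Fin d, r ≤ (j : ℕ) →
      piAt q hq (algebraMap (Polynomial ↥Cs) (RatFunc ↥Cs) q ^ (n : ℤ) * A i j) = 0)
    (hrank : (lcAt q hq (n : ℤ) A).rank = r)
    (Tp : Matrix (Fin d) (Fin d) (Polynomial ↥Cs))
    (hTdet : (Tp.map (algebraMap (Polynomial ↥Cs) (RatFunc ↥Cs))).det ≠ 0)
    (hdesing : matOrdAt q
        (((Tp.map (algebraMap (Polynomial ↥Cs) (RatFunc ↥Cs)))⁻¹.map ⇑phi) * A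
          * (Tp.map (algebraMap (Polynomial ↥Cs) (RatFunc ↥Cs)))) > matOrdAt q A) :
    (∀ i j : Fin d, (i : ℕ) < r → q ∣ Tp i j) ∧
    ∃ Tt : Matrix (Fin d) (Fin d) (Polynomial ↥Cs),
      Tp = Matrix.diagonal (fun i : Fin d => if (i : ℕ) < r then q else 1) * Tt := by
  classical
  haveI : Fact (Irreducible q) := ⟨hq⟩
  open Stmt3Aux in
  set Q : RatFunc ↥Cs := algebraMap (Polynomial ↥Cs) (RatFunc ↥Cs) q with hQ
  set M : Matrix (Fin d) (Fin d) (RatFunc ↥Cs) :=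
    Tp.map (algebraMap (Polynomial ↥Cs) (RatFunc ↥Cs)) with hM
  set B : Matrix (Fin d) (Fin d) (RatFunc ↥Cs) := (M⁻¹.map ⇑phi) * A * M with hB
  -- A * M = (M.map phi) * B
  have hMM : M * M⁻¹ = 1 := Matrix.mul_nonsing_inv M (isUnit_iff_ne_zero.mpr hTdet)
  have h1 : (M.map ⇑phi) * (M⁻¹.map ⇑phi) = 1 := by
    have h2 : ((M * M⁻¹).map ⇑(phi : RatFunc ↥Cs →+* RatFunc ↥Cs)
          : Matrix (Fin d) (Fin d) (RatFunc ↥Cs))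
        = M.map ⇑(phi : RatFunc ↥Cs →+* RatFunc ↥Cs)
          * M⁻¹.map ⇑(phi : RatFunc ↥Cs →+* RatFunc ↥Cs) := Matrix.map_mul
    rw [hMM, Matrix.map_one _ (map_zero _) (map_one _)] at h2
    exact h2.symm
  have hAB : A * M = (M.map ⇑phi) * B := by
    rw [hB, ← Matrix.mul_assoc, ← Matrix.mul_assoc, h1, Matrix.one_mul]
  -- integrality and vanishing facts
  have hAint : ∀ i k : Fin d, IsIntAt q (Q ^ n * A i k) := by
    intro i k
    rw [hQ]
    refine isIntAt_qpow_mul hq ?_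
    have hle : matOrdAt q A ≤ ordAt q (A i k) := matOrdAt_le_ordAt q A i k
    rw [hn] at hle
    exact hle
  have hBzero : ∀ l j : Fin d, piAt q hq (Q ^ n * B l j) = 0 := by
    intro l j
    rw [hQ]
    refine piAt_qpow_mul_eq_zero hq hn0 ?_
    have hle : matOrdAt q B ≤ ordAt q (B l j) := matOrdAt_le_ordAt q B l j
    calc ((-(n : ℤ) : ℤ) : WithTop ℤ) = matOrdAt q A := hn.symm
      _ < matOrdAt q B := hdesing
      _ ≤ ordAt q (B l j) := hle
  have hBint : ∀ l j : Fin d, IsIntAt q (Q ^ n * B l j) := by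
    intro l j
    rw [hQ]
    refine isIntAt_qpow_mul hq ?_
    have hle : matOrdAt q B ≤ ordAt q (B l j) := matOrdAt_le_ordAt q B l j
    refine le_trans (le_of_lt ?_) hle
    calc ((-(n : ℤ) : ℤ) : WithTop ℤ) = matOrdAt q A := hn.symm
      _ < matOrdAt q B := hdesing
  have hMphi : ∀ i l : Fin d, (M.map ⇑phi) i l
      = algebraMap (Polynomial ↥Cs) (RatFunc ↥Cs) ((Tp i l).comp (X + C 1)) := by
    intro i l
    show phi (M i l) = _
    rw [hM]
    show phi (algebraMap (Polynomial ↥Cs) (RatFunc ↥Cs) (Tp i l)) = _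
    exact hphi _
  -- the leading matrix kills Tp mod q
  set Tbar : Matrix (Fin d) (Fin d) (AdjoinRoot q) := Tp.map (AdjoinRoot.mk q) with hTbar
  have hlc : ∀ i k : Fin d, lcAt q hq (n : ℤ) A i k = piAt q hq (Q ^ n * A i k) := by
    intro i k
    show piAt q hq (algebraMap (Polynomial ↥Cs) (RatFunc ↥Cs) q ^ (n : ℤ) * A i k) = _
    rw [zpow_natCast, hQ]
  have key : lcAt q hq (n : ℤ) A * Tbar = 0 := by
    ext i j
    rw [Matrix.mul_apply, Matrix.zero_apply]
    calc ∑ k, lcAt q hq (n : ℤ) A i k * Tbar k j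
        = ∑ k, piAt q hq (Q ^ n * A i k)
            * piAt q hq (algebraMap (Polynomial ↥Cs) (RatFunc ↥Cs) (Tp k j)) := by
          refine Finset.sum_congr rfl fun k _ => ?_
          rw [hlc, piAt_algebraMap hq]
          rfl
      _ = piAt q hq (∑ k, (Q ^ n * A i k) * algebraMap (Polynomial ↥Cs) (RatFunc ↥Cs) (Tp k j)) := by
          rw [piAt_sum_mul hq _ _ _ (fun k _ => hAint i k)
            (fun k _ => isIntAt_algebraMap hq (Tp k j))]
      _ = piAt q hq (Q ^ n * (A * M) i j) := by
          rw [Matrix.mul_apply, Finset.mul_sum]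
          congr 1
          refine Finset.sum_congr rfl fun k _ => ?_
          show Q ^ n * A i k * algebraMap (Polynomial ↥Cs) (RatFunc ↥Cs) (Tp k j) = Q ^ n * (A i k * M k j)
          rw [hM]
          show Q ^ n * A i k * algebraMap (Polynomial ↥Cs) (RatFunc ↥Cs) (Tp k j)
              = Q ^ n * (A i k * algebraMap (Polynomial ↥Cs) (RatFunc ↥Cs) (Tp k j))
          ring
      _ = piAt q hq (∑ l, (M.map ⇑phi) i l * (Q ^ n * B l j)) := by
          rw [hAB, Matrix.mul_apply, Finset.mul_sum]
          congr 1
          refine Finset.sum_congr rfl fun l _ => ?_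
          ring
      _ = ∑ l, piAt q hq ((M.map ⇑phi) i l) * piAt q hq (Q ^ n * B l j) := by
          refine piAt_sum_mul hq _ _ _ (fun l _ => ?_) (fun l _ => hBint l j)
          rw [hMphi]
          exact isIntAt_algebraMap hq _
      _ = 0 := Finset.sum_eq_zero fun l _ => by rw [hBzero l j, mul_zero]
  -- linear algebra: first r rows of Tbar vanish
  have hcol : ∀ i k : Fin d, r ≤ (k : ℕ) → lcAt q hq (n : ℤ) A i k = 0 := by
    intro i k hk
    exact hblock i k hk
  set Abar := lcAt q hq (n : ℤ) A with hAbar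
  set π : (Fin d → AdjoinRoot q) →ₗ[AdjoinRoot q] (Fin r → AdjoinRoot q) :=
    LinearMap.funLeft (AdjoinRoot q) (AdjoinRoot q) (Fin.castLE hr) with hπ
  have hπsurj : Function.Surjective π :=
    LinearMap.funLeft_surjective_of_injective (AdjoinRoot q) (AdjoinRoot q) _ (Fin.castLE_injective hr)
  have hSle : LinearMap.ker π ≤ LinearMap.ker Abar.mulVecLin := by
    intro v hv
    rw [LinearMap.mem_ker] at hv ⊢
    rw [Matrix.mulVecLin_apply]
    funext i
    rw [Matrix.mulVec, dotProduct]
    refine Finset.sum_eq_zero fun k _ => ?_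
    by_cases hk : (k : ℕ) < r
    · have : v k = 0 := by
        have := congrFun hv ⟨(k : ℕ), hk⟩
        simpa [hπ, LinearMap.funLeft, Fin.castLE] using this
      rw [this, mul_zero]
    · rw [hcol i k (not_lt.mp hk), zero_mul]
  have hfinπ : Module.finrank (AdjoinRoot q) (LinearMap.ker π) = d - r := by
    have hrn := LinearMap.finrank_range_add_finrank_ker π
    rw [LinearMap.range_eq_top.mpr hπsurj] at hrn
    simp only [finrank_top, Module.finrank_pi, Fintype.card_fin] at hrn
    omega
  have hfinA : Module.finrank (AdjoinRoot q) (LinearMap.ker Abar.mulVecLin) = d - r := by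
    have hrn := LinearMap.finrank_range_add_finrank_ker Abar.mulVecLin
    have hrk : Module.finrank (AdjoinRoot q) (LinearMap.range Abar.mulVecLin) = r := hrank
    rw [hrk] at hrn
    simp only [Module.finrank_pi, Fintype.card_fin] at hrn
    omega
  have hSeq : LinearMap.ker π = LinearMap.ker Abar.mulVecLin :=
    Submodule.eq_of_le_of_finrank_le hSle (by rw [hfinπ, hfinA])
  have hTbar0 : ∀ i j : Fin d, (i : ℕ) < r → Tbar i j = 0 := by
    intro i j hi
    have hker : (fun k => Tbar k j) ∈ LinearMap.ker Abar.mulVecLin := by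
      rw [LinearMap.mem_ker, Matrix.mulVecLin_apply]
      funext l
      have := congrFun (congrFun key l) j
      rw [Matrix.mul_apply, Matrix.zero_apply] at this
      simpa [Matrix.mulVec, dotProduct] using this
    rw [← hSeq, LinearMap.mem_ker] at hker
    have := congrFun hker ⟨(i : ℕ), hi⟩
    simpa [hπ, LinearMap.funLeft, Fin.castLE, Fin.ext_iff] using this
  have hdvd : ∀ i j : Fin d, (i : ℕ) < r → q ∣ Tp i j := by
    intro i j hi
    have := hTbar0 i j hi
    rwa [hTbar, Matrix.map_apply, AdjoinRoot.mk_eq_zero] at this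
  refine ⟨hdvd, ?_⟩
  refine ⟨Matrix.of fun i j => if h : (i : ℕ) < r then (hdvd i j h).choose else Tp i j, ?_⟩
  refine Matrix.ext fun i j => ?_
  rw [Matrix.diagonal_mul, Matrix.of_apply]
  by_cases h : (i : ℕ) < r
  · rw [if_pos h, dif_pos h]
    exact (hdvd i j h).choose_spec
  · rw [if_neg h, dif_neg h, one_mul]

end
end

section
/- If T ∈ GL_d(C(z)) ∩ Mat_d(C[z]) is a desingularizing transformation for the system [A]_φ at an irreducible pole q whose leading matrix at q has rank r, then q^r divides det(T), and consequently φ(q)^r divides det(φ(T)). -/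
open Polynomial Matrix

noncomputable section
open scoped Classical

variable {K : Type*} [Field K]

namespace StmtAux

def QRep (q : Polynomial K) (f : RatFunc K) (a b : Polynomial K) : Prop :=
  ¬ q ∣ b ∧ f * algebraMap (Polynomial K) (RatFunc K) b = algebraMap (Polynomial K) (RatFunc K) a

variable {q : Polynomial K} [hqf : Fact (Irreducible q)]

theorem qrep_mul {f g : RatFunc K} {a b c e : Polynomial K}
    (hf : QRep q f a b) (hg : QRep q g c e) : QRep q (f * g) (a * c) (b * e) := by
  refine ⟨fun h => ?_, ?_⟩
  · rcases (hqf.out.prime.dvd_mul).1 h with h | h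
    exacts [hf.1 h, hg.1 h]
  · rw [_root_.map_mul, _root_.map_mul, ← hf.2, ← hg.2]; ring

theorem qrep_add {f g : RatFunc K} {a b c e : Polynomial K}
    (hf : QRep q f a b) (hg : QRep q g c e) : QRep q (f + g) (a * e + c * b) (b * e) := by
  refine ⟨fun h => ?_, ?_⟩
  · rcases (hqf.out.prime.dvd_mul).1 h with h | h
    exacts [hf.1 h, hg.1 h]
  · rw [map_add, _root_.map_mul, _root_.map_mul, _root_.map_mul, ← hf.2, ← hg.2]; ring

theorem qrep_algebraMap (p : Polynomial K) :
    QRep q (algebraMap (Polynomial K) (RatFunc K) p) p 1 :=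
  ⟨fun h => hqf.out.not_isUnit (isUnit_of_dvd_one h), by simp⟩

theorem qrep_zero : QRep q (0 : RatFunc K) 0 1 :=
  ⟨fun h => hqf.out.not_isUnit (isUnit_of_dvd_one h), by simp⟩

theorem piAt_qrep (hq : Irreducible q) {f : RatFunc K} {a b : Polynomial K} (h : QRep q f a b) :
    piAt q hq f = AdjoinRoot.mk q a * (AdjoinRoot.mk q b)⁻¹ := by
  have hb : (AdjoinRoot.mk q) b ≠ 0 := by
    rw [Ne, AdjoinRoot.mk_eq_zero]; exact h.1
  by_cases hf : f = 0
  · subst hf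
    have ha : a = 0 := by
      apply RatFunc.algebraMap_injective K
      rw [← h.2]; simp
    subst ha
    simp [piAt]
  have halgd : algebraMap (Polynomial K) (RatFunc K) f.denom ≠ 0 := by
    intro h0
    exact RatFunc.denom_ne_zero f (RatFunc.algebraMap_injective K (by simpa using h0))
  have hfn : f * algebraMap (Polynomial K) (RatFunc K) f.denom
      = algebraMap (Polynomial K) (RatFunc K) f.num :=
    ((div_eq_iff halgd).1 (RatFunc.num_div_denom f)).symm
  have hcross : f.num * b = a * f.denom := by
    apply RatFunc.algebraMap_injective K
    rw [_root_.map_mul, _root_.map_mul, ← hfn, ← h.2]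
    ring
  have hdd : ¬ q ∣ f.denom := by
    intro hd
    have hnum : q ∣ f.num := by
      have : q ∣ f.num * b := hcross ▸ Dvd.dvd.mul_left hd a
      rcases (hq.prime.dvd_mul).1 this with h1 | h1
      · exact h1
      · exact absurd h1 h.1
    obtain ⟨u, v, huv⟩ := RatFunc.isCoprime_num_denom f
    exact hq.not_isUnit (isUnit_of_dvd_one
      (huv ▸ dvd_add (Dvd.dvd.mul_left hnum u) (Dvd.dvd.mul_left hd v)))
  have hdenom : (AdjoinRoot.mk q) f.denom ≠ 0 := by
    rw [Ne, AdjoinRoot.mk_eq_zero]; exact hdd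
  have hmk := congrArg (AdjoinRoot.mk q) hcross
  rw [_root_.map_mul, _root_.map_mul] at hmk
  rw [piAt]
  field_simp
  linear_combination hmk

theorem piAt_add (hq : Irreducible q) {f g : RatFunc K} {a b c e : Polynomial K}
    (hf : QRep q f a b) (hg : QRep q g c e) :
    piAt q hq (f + g) = piAt q hq f + piAt q hq g := by
  rw [piAt_qrep hq hf, piAt_qrep hq hg, piAt_qrep hq (qrep_add hf hg)]
  have hb : (AdjoinRoot.mk q) b ≠ 0 := by rw [Ne, AdjoinRoot.mk_eq_zero]; exact hf.1
  have he : (AdjoinRoot.mk q) e ≠ 0 := by rw [Ne, AdjoinRoot.mk_eq_zero]; exact hg.1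
  simp only [map_add, _root_.map_mul]
  field_simp

theorem piAt_mul (hq : Irreducible q) {f g : RatFunc K} {a b c e : Polynomial K}
    (hf : QRep q f a b) (hg : QRep q g c e) :
    piAt q hq (f * g) = piAt q hq f * piAt q hq g := by
  rw [piAt_qrep hq hf, piAt_qrep hq hg, piAt_qrep hq (qrep_mul hf hg)]
  have hb : (AdjoinRoot.mk q) b ≠ 0 := by rw [Ne, AdjoinRoot.mk_eq_zero]; exact hf.1
  have he : (AdjoinRoot.mk q) e ≠ 0 := by rw [Ne, AdjoinRoot.mk_eq_zero]; exact hg.1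
  simp only [_root_.map_mul]
  field_simp

theorem piAt_algebraMap (hq : Irreducible q) (p : Polynomial K) :
    piAt q hq (algebraMap (Polynomial K) (RatFunc K) p) = AdjoinRoot.mk q p := by
  rw [piAt_qrep hq (qrep_algebraMap p)]
  simp

theorem piAt_zero' (hq : Irreducible q) : piAt q hq (0 : RatFunc K) = 0 := by
  rw [piAt_qrep hq (qrep_zero)]
  simp

theorem piAt_eq_zero (hq : Irreducible q) {f : RatFunc K} {a b : Polynomial K}
    (h : QRep q f (q * a) b) :
    piAt q hq f = 0 := by
  rw [piAt_qrep hq h, _root_.map_mul, AdjoinRoot.mk_self]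
  simp

theorem not_dvd_num_of_dvd_denom {f : RatFunc K} (hdd : q ∣ f.denom) : ¬ q ∣ f.num := by
  intro hnum
  obtain ⟨u, v, huv⟩ := RatFunc.isCoprime_num_denom f
  exact hqf.out.not_isUnit (isUnit_of_dvd_one
    (huv ▸ dvd_add (Dvd.dvd.mul_left hnum u) (Dvd.dvd.mul_left hdd v)))

theorem qrep_of_ord (k n : ℕ) (f : RatFunc K)
    (h : (((k : ℤ) - (n : ℤ) : ℤ) : WithTop ℤ) ≤ ordAt q f) :
    ∃ a b, QRep q (algebraMap (Polynomial K) (RatFunc K) q ^ n * f) (q ^ k * a) b := by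
  have hq := hqf.out
  by_cases hf : f = 0
  · exact ⟨0, 1, fun h1 => hq.not_isUnit (isUnit_of_dvd_one h1), by simp [hf]⟩
  rw [ordAt, if_neg hf] at h
  have h' : (k : ℤ) - (n : ℤ) ≤ (multiplicity q f.num : ℤ) - (multiplicity q f.denom : ℤ) := by
    exact_mod_cast h
  have halgd : algebraMap (Polynomial K) (RatFunc K) f.denom ≠ 0 := by
    intro h0
    exact RatFunc.denom_ne_zero f (RatFunc.algebraMap_injective K (by simpa using h0))
  have hfn : f * algebraMap (Polynomial K) (RatFunc K) f.denom
      = algebraMap (Polynomial K) (RatFunc K) f.num :=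
    ((div_eq_iff halgd).1 (RatFunc.num_div_denom f)).symm
  by_cases hdd : q ∣ f.denom
  · -- pole case: the denominator carries a power of q, bounded by n - k
    have hnum : ¬ q ∣ f.num := not_dvd_num_of_dvd_denom hdd
    have hmn : multiplicity q f.num = 0 := multiplicity_eq_zero.2 hnum
    set m := multiplicity q f.denom with hm
    have hmk : m + k ≤ n := by omega
    have hfin : FiniteMultiplicity q f.denom :=
      FiniteMultiplicity.of_not_isUnit hq.not_isUnit (RatFunc.denom_ne_zero f)
    obtain ⟨u, hu, hnu⟩ := hfin.exists_eq_pow_mul_and_not_dvd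
    refine ⟨q ^ (n - m - k) * f.num, u, hnu, ?_⟩
    have hqm : algebraMap (Polynomial K) (RatFunc K) (q ^ m) ≠ 0 := by
      intro h0
      exact pow_ne_zero m hq.ne_zero (RatFunc.algebraMap_injective K (by simpa using h0))
    apply mul_right_cancel₀ hqm
    have hexp : k + (n - m - k) + m = n := by omega
    have key : (q ^ k * (q ^ (n - m - k) * f.num)) * q ^ m = q ^ n * f.num := by
      rw [show (q ^ k * (q ^ (n - m - k) * f.num)) * q ^ m
          = q ^ (k + (n - m - k) + m) * f.num by ring, hexp]
    calc (algebraMap (Polynomial K) (RatFunc K) q ^ n * f)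
          * algebraMap (Polynomial K) (RatFunc K) u * algebraMap (Polynomial K) (RatFunc K) (q ^ m)
        = algebraMap (Polynomial K) (RatFunc K) q ^ n
            * (f * algebraMap (Polynomial K) (RatFunc K) (q ^ m * u)) := by
          rw [_root_.map_mul]; ring
      _ = algebraMap (Polynomial K) (RatFunc K) q ^ n
            * algebraMap (Polynomial K) (RatFunc K) f.num := by rw [← hu, hfn]
      _ = algebraMap (Polynomial K) (RatFunc K) (q ^ n * f.num) := by
          rw [_root_.map_mul, map_pow]
      _ = algebraMap (Polynomial K) (RatFunc K) ((q ^ k * (q ^ (n - m - k) * f.num)) * q ^ m) := by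
          rw [key]
      _ = algebraMap (Polynomial K) (RatFunc K) (q ^ k * (q ^ (n - m - k) * f.num))
            * algebraMap (Polynomial K) (RatFunc K) (q ^ m) := by rw [_root_.map_mul]
  · -- no pole: the numerator carries at least k - n powers of q
    have hmd : multiplicity q f.denom = 0 := multiplicity_eq_zero.2 hdd
    have hkn : k ≤ n + multiplicity q f.num := by omega
    have hdvd : q ^ k ∣ q ^ n * f.num := by
      refine dvd_trans (pow_dvd_pow q hkn) ?_
      rw [pow_add]
      exact mul_dvd_mul_left _ (pow_multiplicity_dvd q f.num)
    obtain ⟨a, ha⟩ := hdvd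
    refine ⟨a, f.denom, hdd, ?_⟩
    rw [mul_assoc, hfn, ← map_pow, ← _root_.map_mul, ha]

theorem qrep_sum (hq : Irreducible q) {ι : Type*} (s : Finset ι) (f : ι → RatFunc K)
    (h : ∀ i ∈ s, ∃ a b, QRep q (f i) a b) :
    (∃ a b, QRep q (∑ i ∈ s, f i) a b) ∧
    piAt q hq (∑ i ∈ s, f i) = ∑ i ∈ s, piAt q hq (f i) := by
  classical
  revert h
  refine Finset.induction_on s ?_ ?_
  · intro _
    exact ⟨⟨0, 1, qrep_zero⟩, by simp [piAt_zero' hq]⟩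
  · intro a s ha ih h
    obtain ⟨a1, b1, h1⟩ := h a (Finset.mem_insert_self a s)
    obtain ⟨⟨a2, b2, h2⟩, hsum⟩ := ih (fun i hi => h i (Finset.mem_insert_of_mem hi))
    rw [Finset.sum_insert ha, Finset.sum_insert ha]
    exact ⟨⟨_, _, qrep_add h1 h2⟩, by rw [piAt_add hq h1 h2, hsum]⟩

set_option maxHeartbeats 1000000 in
theorem pow_rank_dvd_det {d : ℕ} (L : Matrix (Fin d) (Fin d) (AdjoinRoot q))
    (Tp : Matrix (Fin d) (Fin d) (Polynomial K))
    (hLT : L * (Tp.map (AdjoinRoot.mk q)) = 0) :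
    q ^ L.rank ∣ Tp.det := by
  have hq := hqf.out
  set T0 : Matrix (Fin d) (Fin d) (AdjoinRoot q) := Tp.map (AdjoinRoot.mk q) with hT0
  set r := L.rank with hr
  have hrd : r ≤ d := by simpa using L.rank_le_card_width
  have hsub : LinearMap.range T0.mulVecLin ≤ LinearMap.ker L.mulVecLin := by
    rintro x ⟨y, rfl⟩
    simp only [LinearMap.mem_ker, Matrix.mulVecLin_apply]
    rw [Matrix.mulVec_mulVec, hLT]
    simp
  have hrange : Module.finrank (AdjoinRoot q) (LinearMap.range L.mulVecLin) = r := rfl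
  have hdimL : Module.finrank (AdjoinRoot q) (LinearMap.range L.mulVecLin)
      + Module.finrank (AdjoinRoot q) (LinearMap.ker L.mulVecLin)
      = d := by
    rw [LinearMap.finrank_range_add_finrank_ker]
    simp [Module.finrank_pi]
  have hdimT : Module.finrank (AdjoinRoot q) (LinearMap.range T0.mulVecLin)
      + Module.finrank (AdjoinRoot q) (LinearMap.ker T0.mulVecLin)
      = d := by
    rw [LinearMap.finrank_range_add_finrank_ker]
    simp [Module.finrank_pi]
  have hrangeT0 : Module.finrank (AdjoinRoot q) (LinearMap.range T0.mulVecLin) ≤ d - r := by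
    have := Submodule.finrank_mono hsub
    omega
  have hkerT0 : r ≤ Module.finrank (AdjoinRoot q) (LinearMap.ker T0.mulVecLin) := by omega
  set W := LinearMap.ker T0.mulVecLin with hW
  let bW := Module.finBasis (AdjoinRoot q) W
  let v : Fin r → (Fin d → AdjoinRoot q) := fun t => (bW (Fin.castLE hkerT0 t) : Fin d → AdjoinRoot q)
  have hvW : ∀ t, T0.mulVec (v t) = 0 := fun t => (bW (Fin.castLE hkerT0 t)).2
  have hv : LinearIndependent (AdjoinRoot q) v := by
    have h1 : LinearIndependent (AdjoinRoot q) (fun t : Fin r => bW (Fin.castLE hkerT0 t)) :=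
      bW.linearIndependent.comp _ (Fin.castLE_injective _)
    exact h1.map' (Submodule.subtype W) (Submodule.ker_subtype W)
  have hvr : LinearIndepOn (AdjoinRoot q) id (Set.range v) :=
    hv.linearIndepOn_id
  let b : Module.Basis (hvr.extend (Set.subset_univ _)) (AdjoinRoot q) (Fin d → AdjoinRoot q) :=
    Module.Basis.extend hvr
  haveI : Fintype (hvr.extend (Set.subset_univ _)) := FiniteDimensional.fintypeBasisIndex b
  have hcard : Fintype.card (hvr.extend (Set.subset_univ _)) = d := by
    have h1 := Module.finrank_eq_card_basis b
    simp only [Module.finrank_pi, Fintype.card_fin] at h1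
    omega
  let e := Fintype.equivFinOfCardEq hcard
  let b' : Module.Basis (Fin d) (AdjoinRoot q) (Fin d → AdjoinRoot q) := b.reindex e
  let Sm : Matrix (Fin d) (Fin d) (AdjoinRoot q) := (Pi.basisFun (AdjoinRoot q) (Fin d)).toMatrix ⇑b'
  have hSm : ∀ i j, Sm i j = b' j i := by
    intro i j
    simp [Sm, Module.Basis.toMatrix_apply, Pi.basisFun_repr]
  haveI : Invertible Sm := (Pi.basisFun (AdjoinRoot q) (Fin d)).invertibleToMatrix b'
  have hdetSm : Sm.det ≠ 0 := (Matrix.isUnit_det_of_invertible Sm).ne_zero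
  let ι : Fin r → Fin d := fun t => e ⟨v t, hvr.subset_extend (Set.subset_univ _) (Set.mem_range_self t)⟩
  have hb'ι : ∀ t, b' (ι t) = v t := by
    intro t
    show (b.reindex e) (ι t) = v t
    rw [Module.Basis.reindex_apply]
    show b (e.symm (e ⟨v t, hvr.subset_extend (Set.subset_univ _) (Set.mem_range_self t)⟩)) = v t
    rw [Equiv.symm_apply_apply]
    exact Module.Basis.extend_apply_self hvr _
  have hι : Function.Injective ι := by
    intro s t hst
    have h1 : (⟨v s, hvr.subset_extend (Set.subset_univ _) (Set.mem_range_self s)⟩ :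
        hvr.extend (Set.subset_univ _)) = ⟨v t, hvr.subset_extend (Set.subset_univ _) (Set.mem_range_self t)⟩ :=
      e.injective hst
    exact hv.injective (Subtype.mk_eq_mk.mp h1)
  have hcol : ∀ i t, (T0 * Sm) i (ι t) = 0 := by
    intro i t
    have h1 : (T0 * Sm) i (ι t) = ∑ k, T0 i k * (v t) k := by
      rw [Matrix.mul_apply]
      refine Finset.sum_congr rfl fun k _ => ?_
      rw [hSm, hb'ι]
    rw [h1]
    have h2 := congrFun (hvW t) i
    simpa [Matrix.mulVec, dotProduct] using h2
  have hmk := fun (i j : Fin d) => AdjoinRoot.mk_surjective (Sm i j)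
  choose Sp hSp using hmk
  set M : Matrix (Fin d) (Fin d) (Polynomial K) := Tp * Matrix.of Sp with hM
  have hmapM : M.map (AdjoinRoot.mk q) = T0 * Sm := by
    rw [hM, Matrix.map_mul]
    congr 1
    ext i j
    exact hSp i j
  have hdvdJ : ∀ (i j : Fin d), j ∈ Finset.image ι Finset.univ → q ∣ M i j := by
    intro i j hj
    obtain ⟨t, _, rfl⟩ := Finset.mem_image.1 hj
    rw [← AdjoinRoot.mk_eq_zero]
    have := congrFun (congrFun hmapM i) (ι t)
    simp only [Matrix.map_apply] at this
    rw [this, hcol]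
  set J : Finset (Fin d) := Finset.image ι Finset.univ with hJ
  have hJcard : J.card = r := by
    rw [hJ, Finset.card_image_of_injective _ hι, Finset.card_univ, Fintype.card_fin]
  set N : Matrix (Fin d) (Fin d) (Polynomial K) :=
    Matrix.of (fun i j => if h : j ∈ J then (hdvdJ i j h).choose else M i j) with hN
  have hMN : M = N * Matrix.diagonal (fun j => if j ∈ J then q else 1) := by
    refine Matrix.ext fun i j => ?_
    rw [Matrix.mul_diagonal]
    by_cases hj : j ∈ J
    · simp only [hN, Matrix.of_apply, dif_pos hj, if_pos hj]
      exact ((hdvdJ i j hj).choose_spec).trans (mul_comm _ _)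
    · simp [hN, hj]
  have hdetdiag : (Matrix.diagonal (fun j => if j ∈ J then q else 1)).det = q ^ r := by
    rw [Matrix.det_diagonal]
    rw [Finset.prod_ite_mem Finset.univ J (fun _ => q)]
    rw [Finset.univ_inter, Finset.prod_const, hJcard]
  have hdet : Tp.det * (Matrix.of Sp).det = N.det * q ^ r := by
    rw [← Matrix.det_mul, ← hM, hMN, Matrix.det_mul, hdetdiag]
  have hqS : ¬ q ∣ (Matrix.of Sp).det := by
    intro hdvd
    apply hdetSm
    have h1 : (Matrix.of Sp).map (AdjoinRoot.mk q) = Sm := by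
      refine Matrix.ext fun i j => ?_
      exact hSp i j
    have h2 := RingHom.map_det (AdjoinRoot.mk q) (Matrix.of Sp)
    rw [RingHom.mapMatrix_apply, h1] at h2
    rw [← h2]
    exact AdjoinRoot.mk_eq_zero.2 hdvd
  have hfin : q ^ r ∣ Tp.det * (Matrix.of Sp).det := ⟨N.det, by rw [hdet]; ring⟩
  exact hq.prime.pow_dvd_of_dvd_mul_right _ hqS hfin

end StmtAux

/-- `q^r ∣ det T` and `φ(q)^r ∣ det φ(T)` for a desingularizing `T`. -/
theorem stmt4 (Cs : Subfield ℂ) {d : ℕ}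
    (phi : RatFunc ↥Cs ≃+* RatFunc ↥Cs)
    (hphi : ∀ p : Polynomial ↥Cs, phi (algebraMap (Polynomial ↥Cs) (RatFunc ↥Cs) p)
        = algebraMap (Polynomial ↥Cs) (RatFunc ↥Cs) (p.comp (X + C 1)))
    (q : Polynomial ↥Cs) (hq : Irreducible q)
    (A : Matrix (Fin d) (Fin d) (RatFunc ↥Cs)) (hA : A.det ≠ 0)
    (hpole : matOrdAt q A < 0)
    (n : ℕ) (hn : matOrdAt q A = (-(n : ℤ) : ℤ))
    (r : ℕ) (hrank : (lcAt q hq (n : ℤ) A).rank = r)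
    (Tp : Matrix (Fin d) (Fin d) (Polynomial ↥Cs))
    (hTdet : (Tp.map (algebraMap (Polynomial ↥Cs) (RatFunc ↥Cs))).det ≠ 0)
    (B : Matrix (Fin d) (Fin d) (RatFunc ↥Cs))
    (hB : B = ((Tp.map (algebraMap (Polynomial ↥Cs) (RatFunc ↥Cs)))⁻¹.map ⇑phi) * A
        * (Tp.map (algebraMap (Polynomial ↥Cs) (RatFunc ↥Cs))))
    (hdesing : matOrdAt q B > matOrdAt q A)
    (hother : ∀ p : Polynomial ↥Cs, Irreducible p → matOrdAt p A ≤ matOrdAt p B) :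
    q ^ r ∣ Tp.det ∧
    shiftPoly 1 q ^ r ∣ (Tp.map fun p => p.comp (X + C 1)).det := by
  classical
  haveI hqf : Fact (Irreducible q) := ⟨hq⟩
  open StmtAux in
  set algP := algebraMap (Polynomial ↥Cs) (RatFunc ↥Cs) with halgP
  set T : Matrix (Fin d) (Fin d) (RatFunc ↥Cs) := Tp.map ⇑algP with hT
  -- Step A : A * T = φ(T) * B
  have hmapmul : ∀ (X Y : Matrix (Fin d) (Fin d) (RatFunc ↥Cs)),
      (X * Y).map ⇑phi = X.map ⇑phi * Y.map ⇑phi := by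
    intro X Y
    have h := Matrix.map_mul (L := X) (M := Y) (f := (phi : RatFunc ↥Cs →+* RatFunc ↥Cs))
    simpa using h
  have hTinv : T * T⁻¹ = 1 := Matrix.mul_nonsing_inv T (Ne.isUnit hTdet)
  have hone : (T.map ⇑phi) * (T⁻¹.map ⇑phi) = 1 := by
    rw [← hmapmul, hTinv]
    refine Matrix.ext fun i j => ?_
    by_cases hij : i = j <;>
      simp [Matrix.map_apply, Matrix.one_apply, hij]
  have hATB : A * T = (T.map ⇑phi) * B := by
    rw [hB, ← Matrix.mul_assoc, ← Matrix.mul_assoc, hone, Matrix.one_mul]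
  -- Step B : entrywise order bounds
  have hAord : ∀ i j, ((((0:ℕ):ℤ) - (n:ℤ) : ℤ) : WithTop ℤ) ≤ ordAt q (A i j) := by
    intro i j
    have h0 : (((0:ℕ):ℤ) - (n:ℤ) : ℤ) = (-(n:ℤ) : ℤ) := by push_cast; ring
    rw [h0, ← hn]
    exact Finset.inf_le (Finset.mem_univ (i, j))
  have hwt : ∀ (x : WithTop ℤ) (c : ℤ), (c : WithTop ℤ) < x → ((c + 1 : ℤ) : WithTop ℤ) ≤ x := by
    intro x c hc
    cases x with
    | top => exact le_top
    | coe x =>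
        have : c < x := by exact_mod_cast hc
        exact_mod_cast Int.add_one_le_iff.mpr this
  have hBord : ∀ i j, ((((1:ℕ):ℤ) - (n:ℤ) : ℤ) : WithTop ℤ) ≤ ordAt q (B i j) := by
    intro i j
    have h1 : ((-(n:ℤ) : ℤ) : WithTop ℤ) < matOrdAt q B := by rw [← hn]; exact hdesing
    have h2 : matOrdAt q B ≤ ordAt q (B i j) := Finset.inf_le (Finset.mem_univ (i, j))
    have h3 := le_trans (hwt _ _ h1) h2
    have h0 : (((1:ℕ):ℤ) - (n:ℤ) : ℤ) = (-(n:ℤ) + 1 : ℤ) := by push_cast; ring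
    rw [h0]
    exact h3
  -- Step C : representations of the entries
  have hRA0 := fun (i j : Fin d) => qrep_of_ord (q := q) 0 n (A i j) (hAord i j)
  choose RA SA hRA using hRA0
  have hRB0 := fun (i j : Fin d) => qrep_of_ord (q := q) 1 n (B i j) (hBord i j)
  choose RB SB hRB using hRB0
  -- the leading matrix entries
  have hlc : ∀ i j : Fin d, lcAt q hq (n : ℤ) A i j = piAt q hq (algP q ^ n * A i j) := by
    intro i j
    show piAt q hq (algP q ^ ((n:ℕ):ℤ) * A i j) = _
    rw [zpow_natCast]
  -- Step D : the key orthogonality relation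
  have hkey : lcAt q hq (n : ℤ) A * (Tp.map ⇑(AdjoinRoot.mk q)) = 0 := by
    refine Matrix.ext fun i j => ?_
    have hF1 : algP q ^ n * (A * T) i j = ∑ k, (algP q ^ n * A i k) * algP (Tp k j) := by
      rw [Matrix.mul_apply, Finset.mul_sum]
      refine Finset.sum_congr rfl fun k _ => ?_
      have : T k j = algP (Tp k j) := rfl
      rw [this]; ring
    have hF2 : algP q ^ n * (A * T) i j
        = ∑ k, algP ((Tp i k).comp (X + C 1)) * (algP q ^ n * B k j) := by
      rw [hATB, Matrix.mul_apply, Finset.mul_sum]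
      refine Finset.sum_congr rfl fun k _ => ?_
      have hphik : (T.map ⇑phi) i k = algP ((Tp i k).comp (X + C 1)) := by
        have : (T.map ⇑phi) i k = phi (algP (Tp i k)) := rfl
        rw [this, hphi]
      rw [hphik]; ring
    have hs1 := qrep_sum (q := q) hq Finset.univ
      (fun k => (algP q ^ n * A i k) * algP (Tp k j))
      (fun k _ => ⟨_, _, qrep_mul (hRA i k) (qrep_algebraMap (Tp k j))⟩)
    have hs2 := qrep_sum (q := q) hq Finset.univ
      (fun k => algP ((Tp i k).comp (X + C 1)) * (algP q ^ n * B k j))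
      (fun k _ => ⟨_, _, qrep_mul (qrep_algebraMap _) (hRB k j)⟩)
    have e1 : piAt q hq (algP q ^ n * (A * T) i j)
        = ∑ k, lcAt q hq (n : ℤ) A i k * AdjoinRoot.mk q (Tp k j) := by
      rw [hF1, hs1.2]
      refine Finset.sum_congr rfl fun k _ => ?_
      rw [piAt_mul hq (hRA i k) (qrep_algebraMap (Tp k j)), piAt_algebraMap hq, hlc i k]
    have e2 : piAt q hq (algP q ^ n * (A * T) i j) = 0 := by
      rw [hF2, hs2.2]
      refine Finset.sum_eq_zero fun k _ => ?_
      have hrep := qrep_mul (qrep_algebraMap ((Tp i k).comp (X + C 1))) (hRB k j)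
      have hnum : (Tp i k).comp (X + C 1) * (q ^ 1 * RB k j)
          = q * ((Tp i k).comp (X + C 1) * RB k j) := by ring
      rw [hnum] at hrep
      exact piAt_eq_zero hq hrep
    have e3 : ∑ k, lcAt q hq (n : ℤ) A i k * AdjoinRoot.mk q (Tp k j) = 0 := by
      rw [← e1, e2]
    have e4 : (lcAt q hq (n : ℤ) A * (Tp.map ⇑(AdjoinRoot.mk q))) i j
        = ∑ k, lcAt q hq (n : ℤ) A i k * AdjoinRoot.mk q (Tp k j) := by
      rw [Matrix.mul_apply]
      rfl
    rw [e4, e3]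
    rfl
  -- Step E : conclude
  have hdvd1 : q ^ r ∣ Tp.det := by
    have h := pow_rank_dvd_det (q := q) (lcAt q hq (n : ℤ) A) Tp hkey
    rwa [hrank] at h
  refine ⟨hdvd1, ?_⟩
  set σ : Polynomial ↥Cs →+* Polynomial ↥Cs := Polynomial.eval₂RingHom Polynomial.C (X + C 1)
    with hσdef
  have hσ : ∀ p : Polynomial ↥Cs, σ p = p.comp (X + C 1) := fun p => rfl
  have hmat : (Tp.map fun p => p.comp (X + C 1)) = Tp.map ⇑σ := by
    refine Matrix.ext fun i j => ?_
    simp only [Matrix.map_apply, hσ]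
  rw [hmat]
  have hdet2 : (Tp.map ⇑σ).det = σ Tp.det := by
    rw [RingHom.map_det, RingHom.mapMatrix_apply]
  rw [hdet2]
  have hshift : shiftPoly 1 q = σ q := by
    rw [shiftPoly, hσ]
    norm_num
  have hfinal := map_dvd σ hdvd1
  rw [map_pow] at hfinal
  rwa [hshift]


end
end

section
/- Let A ∈ GL_d(C(z)) with a φ-minimal irreducible pole q, and suppose there exists a polynomial matrix T ∈ GL_d(C(z)) with q | det(T) such that B := φ(T⁻¹)AT satisfies ord_q(B) > ord_q(A) and ord_p(B) ≥ ord_p(A) for all irreducible p. Then there exists a positive integer ℓ such that φ^ℓ(q) divides num(det(A)), the numerator of det(A). -/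
open Polynomial Matrix

noncomputable section
open scoped Classical

variable {K : Type*} [Field K]

/-! ### Auxiliary lemmas -/

set_option synthInstance.maxHeartbeats 1000000
set_option maxHeartbeats 2000000

section Aux

lemma aux_shiftPoly_zero (q : Polynomial K) : shiftPoly 0 q = q := by
  simp [shiftPoly]

lemma aux_shiftPoly_succ (j : ℕ) (q : Polynomial K) :
    shiftPoly (j + 1) q = (algEquivAevalXAddC (1 : K)) (shiftPoly j q) := by
  show _ = (shiftPoly j q).comp (X + C 1)
  rw [shiftPoly, shiftPoly, comp_assoc]
  congr 1
  rw [add_comp, X_comp, C_comp]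
  push_cast
  rw [C_add]
  ring

lemma aux_shiftPoly_irred {q : Polynomial K} (hq : Irreducible q) (j : ℕ) :
    Irreducible (shiftPoly j q) := by
  induction j with
  | zero => rwa [aux_shiftPoly_zero]
  | succ n ih =>
    rw [aux_shiftPoly_succ]
    exact (MulEquiv.irreducible_iff (algEquivAevalXAddC (1 : K))).2 ih

lemma aux_ordAt_neg_of_dvd_denom {q : Polynomial K} (hq : Prime q) {f : RatFunc K}
    (h : q ∣ f.denom) : ordAt q f < 0 := by
  have hf : f ≠ 0 := by
    rintro rfl
    rw [RatFunc.denom_zero] at h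
    exact hq.not_unit (isUnit_of_dvd_one h)
  have hnum : ¬ q ∣ f.num := by
    intro hn
    obtain ⟨u, v, huv⟩ := RatFunc.isCoprime_num_denom f
    exact hq.not_unit (isUnit_of_dvd_one (huv ▸ dvd_add (hn.mul_left u) (h.mul_left v)))
  have h1 : multiplicity q f.num = 0 := multiplicity_eq_zero.2 hnum
  have h2 : 0 < multiplicity q f.denom := multiplicity_pos_of_dvd h
  rw [ordAt, if_neg hf, h1]
  have h3 : ((0 : ℕ) : ℤ) - (multiplicity q f.denom : ℤ) < 0 := by
    have : (1 : ℤ) ≤ (multiplicity q f.denom : ℤ) := by exact_mod_cast h2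
    omega
  exact_mod_cast h3

lemma aux_dvd_denom_of_ordAt_neg {q : Polynomial K} {f : RatFunc K}
    (h : ordAt q f < 0) : q ∣ f.denom := by
  rw [ordAt] at h
  split_ifs at h with hf
  · exact absurd h (by simp)
  · by_contra hd
    rw [multiplicity_eq_zero.2 hd] at h
    have h' : ((multiplicity q f.num : ℤ) - ((0 : ℕ) : ℤ)) < 0 := by exact_mod_cast h
    have : (0 : ℤ) ≤ (multiplicity q f.num : ℤ) := by positivity
    omega

lemma aux_denMat_ne_zero {d : ℕ} (M : Matrix (Fin d) (Fin d) (RatFunc K)) : denMat M ≠ 0 := by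
  rw [denMat]
  exact Finset.prod_ne_zero_iff.2 fun i _ =>
    Finset.prod_ne_zero_iff.2 fun j _ => RatFunc.denom_ne_zero _

lemma aux_denom_entry_dvd {d : ℕ} (M : Matrix (Fin d) (Fin d) (RatFunc K)) (i j : Fin d) :
    (M i j).denom ∣ denMat M := by
  rw [denMat]
  exact dvd_trans (Finset.dvd_prod_of_mem (fun k => (M i k).denom) (Finset.mem_univ j))
    (Finset.dvd_prod_of_mem (fun i => ∏ j, (M i j).denom) (Finset.mem_univ i))

lemma aux_denom_det_dvd {d : ℕ} (M : Matrix (Fin d) (Fin d) (RatFunc K)) :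
    (M.det).denom ∣ (denMat M) ^ d := by
  have hden : denMat M ≠ 0 := aux_denMat_ne_zero M
  have hpow : denMat M ^ d ≠ 0 := pow_ne_zero _ hden
  set c := algebraMap (Polynomial K) (RatFunc K) (denMat M) with hc
  have hcne : c ≠ 0 := RatFunc.algebraMap_ne_zero hden
  set N : Matrix (Fin d) (Fin d) (Polynomial K) :=
    Matrix.of (fun i j => (M i j).num * (denMat M / (M i j).denom)) with hN
  have hentry : ∀ i j, algebraMap (Polynomial K) (RatFunc K) (N i j) = c * M i j := by
    intro i j
    have hdvd : (M i j).denom ∣ denMat M := aux_denom_entry_dvd M i j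
    have hmd := EuclideanDomain.mul_div_cancel' (RatFunc.denom_ne_zero (M i j)) hdvd
    have hdF : algebraMap (Polynomial K) (RatFunc K) (M i j).denom ≠ 0 :=
      RatFunc.algebraMap_ne_zero (RatFunc.denom_ne_zero _)
    have h0 : algebraMap (Polynomial K) (RatFunc K) ((M i j).denom)
        * algebraMap (Polynomial K) (RatFunc K) (denMat M / (M i j).denom) = c := by
      rw [← _root_.map_mul, hmd]
    have h1 := RatFunc.num_div_denom (M i j)
    have hnum_eq : algebraMap (Polynomial K) (RatFunc K) (M i j).denom * M i j
        = algebraMap (Polynomial K) (RatFunc K) (M i j).num := by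
      have h3 := (eq_div_iff hdF).1 h1.symm
      linear_combination h3
    show algebraMap _ _ ((M i j).num * (denMat M / (M i j).denom)) = c * M i j
    rw [_root_.map_mul, ← hnum_eq, ← h0]
    ring
  have hmap : (c • M) = N.map (algebraMap (Polynomial K) (RatFunc K)) := by
    ext i j
    rw [Matrix.map_apply, hentry i j, Matrix.smul_apply, smul_eq_mul]
  have hdet : algebraMap (Polynomial K) (RatFunc K) N.det = c ^ d * M.det := by
    rw [RingHom.map_det, RingHom.mapMatrix_apply, ← hmap, Matrix.det_smul, Fintype.card_fin]
  refine (RatFunc.denom_dvd hpow).2 ⟨N.det, ?_⟩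
  rw [_root_.map_pow, ← hc, eq_div_iff (pow_ne_zero d hcne), hdet]
  ring

lemma aux_no_all_shifts (Cs : Subfield ℂ) {q D : Polynomial ↥Cs}
    (hq : 0 < q.degree) (hD : D ≠ 0) (h : ∀ j : ℕ, shiftPoly j q ∣ D) : False := by
  have hf : Function.Injective (Cs.subtype : ↥Cs →+* ℂ) := Subtype.val_injective
  have hQdeg : 0 < (q.map (Cs.subtype : ↥Cs →+* ℂ)).degree := by
    rwa [degree_map_eq_of_injective hf]
  obtain ⟨α, hα⟩ := Complex.exists_root hQdeg
  have hα' : (q.map (Cs.subtype : ↥Cs →+* ℂ)).eval α = 0 := hα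
  have hD' : D.map (Cs.subtype : ↥Cs →+* ℂ) ≠ 0 := (Polynomial.map_ne_zero_iff hf).2 hD
  apply hD'
  apply Polynomial.eq_zero_of_infinite_isRoot
  apply Set.infinite_of_injective_forall_mem (f := fun j : ℕ => α - (j : ℂ))
  · intro i j hij
    have h' : (i : ℂ) = (j : ℂ) := by
      have := sub_right_injective hij
      exact this
    exact_mod_cast h'
  · intro j
    obtain ⟨c, hc⟩ := h j
    have heq : D.map (Cs.subtype : ↥Cs →+* ℂ)
        = ((q.map (Cs.subtype : ↥Cs →+* ℂ)).comp (X + C (j : ℂ)))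
          * (c.map (Cs.subtype : ↥Cs →+* ℂ)) := by
      rw [hc, Polynomial.map_mul, shiftPoly, Polynomial.map_comp]
      congr 2
      rw [Polynomial.map_add, Polynomial.map_X, Polynomial.map_C, map_natCast]
    show (D.map (Cs.subtype : ↥Cs →+* ℂ)).IsRoot (α - (j : ℂ))
    rw [heq]
    show eval (α - (j : ℂ)) _ = 0
    rw [eval_mul, eval_comp, eval_add, eval_X, eval_C, sub_add_cancel, hα', zero_mul]

end Aux

/-- a desingularizable system has positive φ-dispersion:
some forward shift `φ^ℓ(q)` divides `num(det A)`. -/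
theorem stmt5 (Cs : Subfield ℂ) {d : ℕ}
    (phi : RatFunc ↥Cs ≃+* RatFunc ↥Cs)
    (hphi : ∀ p : Polynomial ↥Cs, phi (algebraMap (Polynomial ↥Cs) (RatFunc ↥Cs) p)
        = algebraMap (Polynomial ↥Cs) (RatFunc ↥Cs) (p.comp (X + C 1)))
    (q : Polynomial ↥Cs) (hq : Irreducible q)
    (A : Matrix (Fin d) (Fin d) (RatFunc ↥Cs)) (hA : A.det ≠ 0)
    (hmin : PhiMinimalPole q A)
    (Tp : Matrix (Fin d) (Fin d) (Polynomial ↥Cs))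
    (hTdet : (Tp.map (algebraMap (Polynomial ↥Cs) (RatFunc ↥Cs))).det ≠ 0)
    (hqT : q ∣ Tp.det)
    (B : Matrix (Fin d) (Fin d) (RatFunc ↥Cs))
    (hB : B = ((Tp.map (algebraMap (Polynomial ↥Cs) (RatFunc ↥Cs)))⁻¹.map ⇑phi) * A
        * (Tp.map (algebraMap (Polynomial ↥Cs) (RatFunc ↥Cs))))
    (hdesing : matOrdAt q B > matOrdAt q A)
    (hother : ∀ p : Polynomial ↥Cs, Irreducible p → matOrdAt p A ≤ matOrdAt p B) :
    ∃ ℓ : ℕ, 0 < ℓ ∧ shiftPoly ℓ q ∣ (Matrix.det A).num := by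
  by_contra hcon
  push_neg at hcon
  -- Basic notation
  have hTdet' : (Tp.map (algebraMap (Polynomial ↥Cs) (RatFunc ↥Cs))).det
      = algebraMap (Polynomial ↥Cs) (RatFunc ↥Cs) Tp.det :=
    (RingHom.map_det (algebraMap (Polynomial ↥Cs) (RatFunc ↥Cs)) Tp).symm
  have hD0 : Tp.det ≠ 0 := by
    intro h
    exact hTdet (by rw [hTdet', h, map_zero])
  have hE0 : (algEquivAevalXAddC (1 : ↥Cs)) Tp.det ≠ 0 := by
    intro h
    exact hD0 ((algEquivAevalXAddC (1 : ↥Cs)).injective (by rw [h, map_zero]))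
  have hmapE : algebraMap (Polynomial ↥Cs) (RatFunc ↥Cs) ((algEquivAevalXAddC (1 : ↥Cs)) Tp.det)
      = phi (algebraMap (Polynomial ↥Cs) (RatFunc ↥Cs) Tp.det) := by
    rw [hphi Tp.det]; rfl
  have hEF : algebraMap (Polynomial ↥Cs) (RatFunc ↥Cs) ((algEquivAevalXAddC (1 : ↥Cs)) Tp.det) ≠ 0 :=
    RatFunc.algebraMap_ne_zero hE0
  have hDF : algebraMap (Polynomial ↥Cs) (RatFunc ↥Cs) Tp.det ≠ 0 :=
    RatFunc.algebraMap_ne_zero hD0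
  -- The determinant identity
  have hdetB : B.det * algebraMap (Polynomial ↥Cs) (RatFunc ↥Cs)
      ((algEquivAevalXAddC (1 : ↥Cs)) Tp.det)
      = A.det * algebraMap (Polynomial ↥Cs) (RatFunc ↥Cs) Tp.det := by
    have hd1 : (((Tp.map (algebraMap (Polynomial ↥Cs) (RatFunc ↥Cs)))⁻¹).map ⇑phi).det
        = phi ((Tp.map (algebraMap (Polynomial ↥Cs) (RatFunc ↥Cs)))⁻¹).det :=
      (RingHom.map_det (phi : RatFunc ↥Cs →+* RatFunc ↥Cs) _).symm
    rw [hB, Matrix.det_mul, Matrix.det_mul, hd1, Matrix.det_nonsing_inv,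
      Ring.inverse_eq_inv', hTdet', map_inv₀, ← hmapE]
    have hcan := inv_mul_cancel_right₀ hEF
      (A.det * algebraMap (Polynomial ↥Cs) (RatFunc ↥Cs) Tp.det)
    linear_combination hcan
  have hdetB0 : B.det ≠ 0 := by
    intro h
    rw [h, zero_mul] at hdetB
    exact (mul_ne_zero hA hDF) hdetB.symm
  -- nonzeroness of numerators and denominators
  have hnA : A.det.num ≠ 0 := RatFunc.num_ne_zero hA
  have hnB : B.det.num ≠ 0 := RatFunc.num_ne_zero hdetB0
  have hdAne : A.det.denom ≠ 0 := RatFunc.denom_ne_zero _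
  have hdBne : B.det.denom ≠ 0 := RatFunc.denom_ne_zero _
  -- The key polynomial identity
  have hkeyF : algebraMap (Polynomial ↥Cs) (RatFunc ↥Cs)
      (B.det.num * ((algEquivAevalXAddC (1 : ↥Cs)) Tp.det) * A.det.denom)
      = algebraMap (Polynomial ↥Cs) (RatFunc ↥Cs) (A.det.num * Tp.det * B.det.denom) := by
    have h1 := RatFunc.num_div_denom A.det
    have h2 := RatFunc.num_div_denom B.det
    have hdAF : algebraMap (Polynomial ↥Cs) (RatFunc ↥Cs) A.det.denom ≠ 0 :=
      RatFunc.algebraMap_ne_zero hdAne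
    have hdBF : algebraMap (Polynomial ↥Cs) (RatFunc ↥Cs) B.det.denom ≠ 0 :=
      RatFunc.algebraMap_ne_zero hdBne
    have ha2 : algebraMap (Polynomial ↥Cs) (RatFunc ↥Cs) A.det.num
        = A.det * algebraMap (Polynomial ↥Cs) (RatFunc ↥Cs) A.det.denom := by
      exact ((eq_div_iff hdAF).1 h1.symm).symm
    have hb2 : algebraMap (Polynomial ↥Cs) (RatFunc ↥Cs) B.det.num
        = B.det * algebraMap (Polynomial ↥Cs) (RatFunc ↥Cs) B.det.denom := by
      exact ((eq_div_iff hdBF).1 h2.symm).symm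
    simp only [_root_.map_mul]
    rw [ha2, hb2]
    linear_combination (algebraMap (Polynomial ↥Cs) (RatFunc ↥Cs) A.det.denom)
      * (algebraMap (Polynomial ↥Cs) (RatFunc ↥Cs) B.det.denom) * hdetB
  have key : B.det.num * ((algEquivAevalXAddC (1 : ↥Cs)) Tp.det) * A.det.denom
      = A.det.num * Tp.det * B.det.denom :=
    IsFractionRing.injective (Polynomial ↥Cs) (RatFunc ↥Cs) hkeyF
  -- No forward shift divides the denominator of det B
  have hdB0 : ∀ j : ℕ, 1 ≤ j → ¬ shiftPoly j q ∣ B.det.denom := by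
    intro j hj hdvd
    have hp : Prime (shiftPoly j q) := (aux_shiftPoly_irred hq j).prime
    have h2 : shiftPoly j q ∣ denMat B :=
      hp.dvd_of_dvd_pow (dvd_trans hdvd (aux_denom_det_dvd B))
    rw [denMat] at h2
    obtain ⟨i, -, h3⟩ := (hp.dvd_finset_prod_iff _).1 h2
    obtain ⟨k, -, h4⟩ := (hp.dvd_finset_prod_iff _).1 h3
    have h5 : matOrdAt (shiftPoly j q) B < 0 :=
      lt_of_le_of_lt (Finset.inf_le (Finset.mem_univ ((i, k) : Fin d × Fin d)))
        (aux_ordAt_neg_of_dvd_denom hp h4)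
    have h6 : matOrdAt (shiftPoly j q) A < 0 :=
      lt_of_le_of_lt (hother _ (aux_shiftPoly_irred hq j)) h5
    obtain ⟨⟨i', k'⟩, -, h7⟩ := Finset.inf_lt_iff.1 h6
    exact hmin.2 j hj
      (dvd_trans (aux_dvd_denom_of_ordAt_neg h7) (aux_denom_entry_dvd A i' k'))
  -- No forward shift divides the denominator of det A
  have hdA0 : ∀ j : ℕ, 1 ≤ j → ¬ shiftPoly j q ∣ A.det.denom := by
    intro j hj hdvd
    have hp : Prime (shiftPoly j q) := (aux_shiftPoly_irred hq j).prime
    exact hmin.2 j hj (hp.dvd_of_dvd_pow (dvd_trans hdvd (aux_denom_det_dvd A)))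
  -- multiplicity of a triple product
  have hmul3 : ∀ a b c : Polynomial ↥Cs, a ≠ 0 → b ≠ 0 → c ≠ 0 →
      ∀ p : Polynomial ↥Cs, Prime p →
      multiplicity p (a * b * c) = multiplicity p a + multiplicity p b + multiplicity p c := by
    intro a b c ha hb hc p hp
    rw [multiplicity_mul hp
        (FiniteMultiplicity.of_prime_left hp (mul_ne_zero (mul_ne_zero ha hb) hc)),
      multiplicity_mul hp (FiniteMultiplicity.of_prime_left hp (mul_ne_zero ha hb))]
  -- the multiplicities of the shifts of q in det Tp are nondecreasing
  have hstep : ∀ i : ℕ,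
      multiplicity (shiftPoly i q) Tp.det ≤ multiplicity (shiftPoly (i + 1) q) Tp.det := by
    intro i
    have hp : Prime (shiftPoly (i + 1) q) := (aux_shiftPoly_irred hq (i + 1)).prime
    have e1 := hmul3 _ _ _ hnB hE0 hdAne _ hp
    have e2 := hmul3 _ _ _ hnA hD0 hdBne _ hp
    rw [key, e2] at e1
    rw [multiplicity_eq_zero.2 (hdA0 (i + 1) (by omega))] at e1
    rw [multiplicity_eq_zero.2 (hcon (i + 1) (by omega))] at e1
    rw [multiplicity_eq_zero.2 (hdB0 (i + 1) (by omega))] at e1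
    have eE : multiplicity (shiftPoly (i + 1) q) ((algEquivAevalXAddC (1 : ↥Cs)) Tp.det)
        = multiplicity (shiftPoly i q) Tp.det := by
      rw [aux_shiftPoly_succ]
      exact multiplicity_map_eq (algEquivAevalXAddC (1 : ↥Cs))
    rw [eE] at e1
    omega
  -- hence every shift of q divides det Tp
  have hmj : ∀ j : ℕ, 0 < multiplicity (shiftPoly j q) Tp.det := by
    intro j
    induction j with
    | zero =>
      rw [aux_shiftPoly_zero]
      exact multiplicity_pos_of_dvd hqT
    | succ n ih => exact lt_of_lt_of_le ih (hstep n)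
  exact aux_no_all_shifts Cs (degree_pos_of_irreducible hq) hD0
    fun j => dvd_of_multiplicity_pos (hmj j)

end
end

section
/- Let q ∈ C[z] be a φ-minimal pole of [A]_φ, n := -ord_q(A), Ã := qⁿA. If there exists a polynomial matrix T ∈ GL_d(C(z)) with q | det(T) such that ord_q(φ(T⁻¹)AT) > ord_q(A) and ord_p(φ(T⁻¹)AT) ≥ ord_p(A) for all irreducible p, then there exists a positive integer k such that π_q( Ã · φ⁻¹(Ã) · φ⁻²(Ã) ⋯ φ⁻ᵏ(Ã) ) = 0, where π_q is reduction modulo q applied to a matrix with entries in O_q. -/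
open Polynomial Matrix

noncomputable section
open scoped Classical

variable {K : Type*} [Field K]

/-- The gauge transform `T[A]_φ = φ(T⁻¹) A T` for a polynomial transformation `T`. -/
def gaugeT {d : ℕ} (phi : RatFunc K ≃+* RatFunc K)
    (Tp : Matrix (Fin d) (Fin d) (Polynomial K))
    (M : Matrix (Fin d) (Fin d) (RatFunc K)) : Matrix (Fin d) (Fin d) (RatFunc K) :=
  ((Tp.map (algebraMap (Polynomial K) (RatFunc K)))⁻¹.map ⇑phi) * M
    * (Tp.map (algebraMap (Polynomial K) (RatFunc K)))
namespace Stmt8Aux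

lemma irr_prime {q : Polynomial K} (hq : Irreducible q) : Prime q := hq.prime

lemma multFin {q x : Polynomial K} (hq : Irreducible q) (hx : x ≠ 0) :
    FiniteMultiplicity q x :=
  FiniteMultiplicity.of_prime_left hq.prime hx

lemma mult_one {q : Polynomial K} (hq : Irreducible q) : multiplicity q (1 : Polynomial K) = 0 :=
  multiplicity_eq_zero.2 fun h => hq.not_isUnit (isUnit_of_dvd_one h)

lemma ordAt_zero (q : Polynomial K) : ordAt q (0 : RatFunc K) = ⊤ := if_pos rfl

lemma num_identity (f : RatFunc K) :
    f * algebraMap (Polynomial K) (RatFunc K) f.denom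
      = algebraMap (Polynomial K) (RatFunc K) f.num := by
  have h0 : algebraMap (Polynomial K) (RatFunc K) f.denom ≠ 0 :=
    RatFunc.algebraMap_ne_zero (RatFunc.denom_ne_zero f)
  have := RatFunc.num_div_denom f
  rw [div_eq_iff h0] at this
  rw [← this]

lemma ordAt_spec {q : Polynomial K} (hq : Irreducible q) {f : RatFunc K} {a b : Polynomial K}
    (ha : a ≠ 0) (hb : b ≠ 0)
    (h : f * algebraMap (Polynomial K) (RatFunc K) b = algebraMap (Polynomial K) (RatFunc K) a) :
    ordAt q f = (((multiplicity q a : ℤ) - (multiplicity q b : ℤ) : ℤ) : WithTop ℤ) := by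
  have hf : f ≠ 0 := by
    rintro rfl
    rw [zero_mul] at h
    exact ha ((RatFunc.algebraMap_injective K (h.symm.trans (map_zero _).symm)).symm).symm
  have hcross : f.num * b = a * f.denom := by
    apply RatFunc.algebraMap_injective K
    rw [_root_.map_mul, _root_.map_mul, ← num_identity f, mul_comm (f * _) _, ← mul_assoc, mul_comm _ f, h,
      mul_comm]
  have h1 : multiplicity q (f.num * b) = multiplicity q f.num + multiplicity q b :=
    multiplicity_mul hq.prime (multFin hq (mul_ne_zero (RatFunc.num_ne_zero hf) hb))
  have h2 : multiplicity q (a * f.denom) = multiplicity q a + multiplicity q f.denom :=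
    multiplicity_mul hq.prime (multFin hq (mul_ne_zero ha (RatFunc.denom_ne_zero f)))
  rw [hcross, h2] at h1
  rw [ordAt, if_neg hf]
  congr 1
  omega

lemma ordAt_algebraMap {q : Polynomial K} (hq : Irreducible q) {p : Polynomial K} (hp : p ≠ 0) :
    ordAt q (algebraMap (Polynomial K) (RatFunc K) p) = ((multiplicity q p : ℤ) : WithTop ℤ) := by
  rw [ordAt_spec hq hp one_ne_zero (by rw [_root_.map_one, mul_one]), mult_one hq]
  norm_num

lemma ordAt_poly_nonneg {q : Polynomial K} (hq : Irreducible q) (p : Polynomial K) :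
    0 ≤ ordAt q (algebraMap (Polynomial K) (RatFunc K) p) := by
  by_cases hp : p = 0
  · rw [hp, map_zero, ordAt_zero]; exact le_top
  · rw [ordAt_algebraMap hq hp]
    exact_mod_cast Int.natCast_nonneg _

lemma ordAt_one_nonneg {q : Polynomial K} (hq : Irreducible q) :
    0 ≤ ordAt q (1 : RatFunc K) := by
  simpa using ordAt_poly_nonneg hq 1

lemma ordAt_mul {q : Polynomial K} (hq : Irreducible q) (f g : RatFunc K) :
    ordAt q (f * g) = ordAt q f + ordAt q g := by
  by_cases hf : f = 0
  · simp [hf, ordAt_zero]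
  by_cases hg : g = 0
  · simp [hg, ordAt_zero]
  have hfg : (f * g) * algebraMap (Polynomial K) (RatFunc K) (f.denom * g.denom)
      = algebraMap (Polynomial K) (RatFunc K) (f.num * g.num) := by
    rw [_root_.map_mul, _root_.map_mul, mul_mul_mul_comm, num_identity, num_identity]
  rw [ordAt_spec hq (mul_ne_zero (RatFunc.num_ne_zero hf) (RatFunc.num_ne_zero hg))
    (mul_ne_zero (RatFunc.denom_ne_zero f) (RatFunc.denom_ne_zero g)) hfg,
    ordAt_spec hq (RatFunc.num_ne_zero hf) (RatFunc.denom_ne_zero f) (num_identity f),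
    ordAt_spec hq (RatFunc.num_ne_zero hg) (RatFunc.denom_ne_zero g) (num_identity g),
    multiplicity_mul hq.prime (multFin hq (mul_ne_zero (RatFunc.num_ne_zero hf) (RatFunc.num_ne_zero hg))),
    multiplicity_mul hq.prime (multFin hq (mul_ne_zero (RatFunc.denom_ne_zero f) (RatFunc.denom_ne_zero g)))]
  rw [← WithTop.coe_add]
  congr 1
  push_cast
  ring

lemma min_le_ordAt_add {q : Polynomial K} (hq : Irreducible q) (f g : RatFunc K) :
    min (ordAt q f) (ordAt q g) ≤ ordAt q (f + g) := by
  by_cases hf : f = 0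
  · simp [hf, min_le_right]
  by_cases hg : g = 0
  · simp [hg, min_le_left]
  by_cases hfg : f + g = 0
  · rw [hfg, ordAt_zero]; exact le_top
  have hid : (f + g) * algebraMap (Polynomial K) (RatFunc K) (f.denom * g.denom)
      = algebraMap (Polynomial K) (RatFunc K) (f.num * g.denom + g.num * f.denom) := by
    rw [map_add, _root_.map_mul, add_mul]
    rw [show f * (algebraMap (Polynomial K) (RatFunc K) f.denom
        * algebraMap (Polynomial K) (RatFunc K) g.denom)
      = (f * algebraMap (Polynomial K) (RatFunc K) f.denom)
        * algebraMap (Polynomial K) (RatFunc K) g.denom by ring]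
    rw [show g * (algebraMap (Polynomial K) (RatFunc K) f.denom
        * algebraMap (Polynomial K) (RatFunc K) g.denom)
      = (g * algebraMap (Polynomial K) (RatFunc K) g.denom)
        * algebraMap (Polynomial K) (RatFunc K) f.denom by ring]
    rw [num_identity, num_identity, _root_.map_mul, _root_.map_mul]
  have hnum : f.num * g.denom + g.num * f.denom ≠ 0 := by
    intro h0
    rw [h0, map_zero] at hid
    exact hfg (by
      have := mul_eq_zero.1 hid
      rcases this with h | h
      · exact h
      · exact absurd h (RatFunc.algebraMap_ne_zero
          (mul_ne_zero (RatFunc.denom_ne_zero f) (RatFunc.denom_ne_zero g))))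
  rw [ordAt_spec hq hnum (mul_ne_zero (RatFunc.denom_ne_zero f) (RatFunc.denom_ne_zero g)) hid,
    ordAt_spec hq (RatFunc.num_ne_zero hf) (RatFunc.denom_ne_zero f) (num_identity f),
    ordAt_spec hq (RatFunc.num_ne_zero hg) (RatFunc.denom_ne_zero g) (num_identity g)]
  have key : min (multiplicity q (f.num * g.denom)) (multiplicity q (g.num * f.denom))
      ≤ multiplicity q (f.num * g.denom + g.num * f.denom) := by
    rw [← (multFin hq hnum).pow_dvd_iff_le_multiplicity]
    exact dvd_add
      (dvd_trans (pow_dvd_pow q (min_le_left _ _)) (pow_multiplicity_dvd q _))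
      (dvd_trans (pow_dvd_pow q (min_le_right _ _)) (pow_multiplicity_dvd q _))
  have m1 := multiplicity_mul hq.prime (multFin hq (mul_ne_zero (RatFunc.num_ne_zero hf)
    (RatFunc.denom_ne_zero g)))
  have m2 := multiplicity_mul hq.prime (multFin hq (mul_ne_zero (RatFunc.num_ne_zero hg)
    (RatFunc.denom_ne_zero f)))
  have m3 := multiplicity_mul hq.prime (multFin hq (mul_ne_zero (RatFunc.denom_ne_zero f)
    (RatFunc.denom_ne_zero g)))
  rw [m1, m2] at key
  rw [m3]
  rw [← WithTop.coe_min, WithTop.coe_le_coe]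
  omega


lemma le_ordAt_sum {q : Polynomial K} (hq : Irreducible q) {ι : Type*} (s : Finset ι)
    (f : ι → RatFunc K) {m : WithTop ℤ} (h : ∀ i ∈ s, m ≤ ordAt q (f i)) :
    m ≤ ordAt q (∑ i ∈ s, f i) := by
  induction s using Finset.cons_induction with
  | empty => rw [Finset.sum_empty, ordAt_zero]; exact le_top
  | cons a s ha ih =>
    rw [Finset.sum_cons]
    refine le_trans ?_ (min_le_ordAt_add hq _ _)
    exact le_min (h a (Finset.mem_cons_self a s))
      (ih fun i hi => h i (Finset.mem_cons_of_mem hi))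

lemma matOrdAt_le_entry {d : ℕ} {q : Polynomial K} (A : Matrix (Fin d) (Fin d) (RatFunc K))
    (i j : Fin d) : matOrdAt q A ≤ ordAt q (A i j) :=
  Finset.inf_le (Finset.mem_univ (i, j))

lemma le_matOrdAt {d : ℕ} {q : Polynomial K} {A : Matrix (Fin d) (Fin d) (RatFunc K)}
    {m : WithTop ℤ} (h : ∀ i j, m ≤ ordAt q (A i j)) : m ≤ matOrdAt q A :=
  Finset.le_inf fun ij _ => h ij.1 ij.2

lemma matOrdAt_one_nonneg {d : ℕ} {q : Polynomial K} (hq : Irreducible q) :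
    0 ≤ matOrdAt q (1 : Matrix (Fin d) (Fin d) (RatFunc K)) := by
  refine le_matOrdAt fun i j => ?_
  rcases eq_or_ne i j with rfl | hij
  · rw [Matrix.one_apply_eq]; exact ordAt_one_nonneg hq
  · rw [Matrix.one_apply_ne hij, ordAt_zero]; exact le_top

lemma matOrdAt_mul {d : ℕ} {q : Polynomial K} (hq : Irreducible q)
    (A B : Matrix (Fin d) (Fin d) (RatFunc K)) :
    matOrdAt q A + matOrdAt q B ≤ matOrdAt q (A * B) := by
  refine le_matOrdAt fun i j => ?_
  rw [Matrix.mul_apply]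
  refine le_ordAt_sum hq _ _ fun k _ => ?_
  rw [ordAt_mul hq]
  exact add_le_add (matOrdAt_le_entry A i k) (matOrdAt_le_entry B k j)

lemma matOrdAt_list_prod_nonneg {d : ℕ} {q : Polynomial K} (hq : Irreducible q)
    (L : List (Matrix (Fin d) (Fin d) (RatFunc K))) (h : ∀ M ∈ L, 0 ≤ matOrdAt q M) :
    0 ≤ matOrdAt q L.prod := by
  induction L with
  | nil => exact matOrdAt_one_nonneg hq
  | cons M L ih =>
    rw [List.prod_cons]
    calc (0 : WithTop ℤ) = 0 + 0 := by rw [add_zero]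
    _ ≤ matOrdAt q M + matOrdAt q L.prod :=
        add_le_add (h M (List.mem_cons_self)) (ih fun N hN => h N (List.mem_cons_of_mem _ hN))
    _ ≤ _ := matOrdAt_mul hq _ _

lemma piAt_eq_zero {q : Polynomial K} (hq : Irreducible q) {f : RatFunc K}
    (h : 0 < ordAt q f) : piAt q hq f = 0 := by
  by_cases hf : f = 0
  · rw [piAt, hf, RatFunc.num_zero, map_zero, zero_mul]
  · rw [ordAt, if_neg hf] at h
    have hz : (0 : ℤ) < (multiplicity q f.num : ℤ) - (multiplicity q f.denom : ℤ) := by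
      exact_mod_cast h
    have hdvd : q ∣ f.num := dvd_of_multiplicity_pos (by omega)
    rw [piAt, (AdjoinRoot.mk_eq_zero).2 hdvd, zero_mul]

/-- The shift-by-`c` ring automorphism of `K[X]`. -/
def shE (c : K) : Polynomial K ≃+* Polynomial K :=
  RingEquiv.ofRingHom (eval₂RingHom Polynomial.C (X + Polynomial.C c) :
      Polynomial K →+* Polynomial K)
    (eval₂RingHom Polynomial.C (X - Polynomial.C c))
    (RingHom.ext fun p => by
      show (p.comp (X - C c)).comp (X + C c) = p
      rw [comp_assoc]
      simp)
    (RingHom.ext fun p => by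
      show (p.comp (X + C c)).comp (X - C c) = p
      rw [comp_assoc]
      simp)

lemma shE_apply (c : K) (p : Polynomial K) : shE c p = p.comp (X + C c) := rfl

lemma shE_shiftPoly (j : ℕ) (q : Polynomial K) :
    shE (-(j : K)) (shiftPoly j q) = q := by
  rw [shE_apply, shiftPoly, comp_assoc]
  simp [sub_eq_add_neg]

lemma shiftPoly_irreducible {q : Polynomial K} (hq : Irreducible q) (j : ℕ) :
    Irreducible (shiftPoly j q) := by
  refine (MulEquiv.irreducible_iff (shE (-(j : K)))).mp ?_
  rw [shE_shiftPoly]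
  exact hq

lemma shE_ne_zero (c : K) {p : Polynomial K} (hp : p ≠ 0) : shE c p ≠ 0 := by
  intro h
  exact hp (by simpa using congrArg (shE c).symm h)

lemma mult_shE {c : K} (x p : Polynomial K) :
    multiplicity (shE c x) (shE c p) = multiplicity x p :=
  multiplicity_map_eq (shE c)

/-- The `j`-th power of `φ⁻¹` as a ring hom. -/
def psi (phi : RatFunc K ≃+* RatFunc K) : ℕ → (RatFunc K →+* RatFunc K)
  | 0 => RingHom.id _
  | (j+1) => (psi phi j).comp (phi.symm : RatFunc K ≃+* RatFunc K).toRingHom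

lemma psi_coe (phi : RatFunc K ≃+* RatFunc K) (j : ℕ) :
    ⇑(psi phi j) = (⇑phi.symm)^[j] := by
  induction j with
  | zero => rfl
  | succ j ih =>
    funext x
    rw [Function.iterate_succ_apply, psi, RingHom.comp_apply, ih]
    rfl

section Phi
variable {phi : RatFunc K ≃+* RatFunc K}
  (hphi : ∀ p : Polynomial K, phi (algebraMap (Polynomial K) (RatFunc K) p)
      = algebraMap (Polynomial K) (RatFunc K) (p.comp (X + C 1)))

include hphi

lemma symm_alg (p : Polynomial K) :
    phi.symm (algebraMap (Polynomial K) (RatFunc K) p)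
      = algebraMap (Polynomial K) (RatFunc K) (p.comp (X - C 1)) := by
  rw [show phi.symm ((algebraMap (Polynomial K) (RatFunc K)) p)
      = algebraMap (Polynomial K) (RatFunc K) (p.comp (X - C 1))
    ↔ (algebraMap (Polynomial K) (RatFunc K)) p
      = phi (algebraMap (Polynomial K) (RatFunc K) (p.comp (X - C 1)))
    from (Equiv.symm_apply_eq phi.toEquiv), hphi, comp_assoc]
  simp

lemma psi_alg (j : ℕ) (p : Polynomial K) :
    psi phi j (algebraMap (Polynomial K) (RatFunc K) p)
      = algebraMap (Polynomial K) (RatFunc K) (p.comp (X - C (j : K))) := by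
  induction j generalizing p with
  | zero => simp [psi]
  | succ j ih =>
    show psi phi j (phi.symm _) = _
    rw [symm_alg hphi, ih, comp_assoc]
    congr 2
    push_cast
    simp [sub_comp, sub_sub]

lemma ordAt_psi {q : Polynomial K} (hq : Irreducible q) (j : ℕ) (f : RatFunc K) :
    ordAt q (psi phi j f) = ordAt (shiftPoly j q) f := by
  by_cases hf : f = 0
  · rw [hf, map_zero, ordAt_zero, ordAt_zero]
  have hqj : Irreducible (shiftPoly j q) := shiftPoly_irreducible hq j
  have hid := congrArg (psi phi j) (num_identity f)
  rw [_root_.map_mul, psi_alg hphi, psi_alg hphi] at hid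
  have hnum : f.num.comp (X - C (j : K)) ≠ 0 := by
    have : f.num.comp (X - C (j : K)) = shE (-(j : K)) f.num := by
      rw [shE_apply, map_neg, ← sub_eq_add_neg]
    rw [this]; exact shE_ne_zero _ (RatFunc.num_ne_zero hf)
  have hden : f.denom.comp (X - C (j : K)) ≠ 0 := by
    have : f.denom.comp (X - C (j : K)) = shE (-(j : K)) f.denom := by
      rw [shE_apply, map_neg, ← sub_eq_add_neg]
    rw [this]; exact shE_ne_zero _ (RatFunc.denom_ne_zero f)
  rw [ordAt_spec hq hnum hden hid,
    ordAt_spec hqj (RatFunc.num_ne_zero hf) (RatFunc.denom_ne_zero f) (num_identity f)]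
  have key : ∀ p : Polynomial K,
      multiplicity q (p.comp (X - C (j : K))) = multiplicity (shiftPoly j q) p := by
    intro p
    have h1 : p.comp (X - C (j : K)) = shE (-(j : K)) p := by
      rw [shE_apply, map_neg, ← sub_eq_add_neg]
    rw [h1]
    conv_lhs => rw [← shE_shiftPoly j q]
    rw [mult_shE]
  rw [key, key]

end Phi

lemma psi_phi (phi : RatFunc K ≃+* RatFunc K) (j : ℕ) (x : RatFunc K) :
    psi phi (j + 1) (phi x) = psi phi j x := by
  show psi phi j (phi.symm (phi x)) = psi phi j x
  rw [RingEquiv.symm_apply_apply]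

lemma tele {d : ℕ} (phi : RatFunc K ≃+* RatFunc K)
    (Tm Btil Ti : Matrix (Fin d) (Fin d) (RatFunc K)) (hTi : Ti * Tm = 1) (k : ℕ) :
    (((List.range (k+1)).map
        (fun j => ((Tm.map ⇑phi) * Btil * Ti).map ⇑(psi phi j))).prod)
      = (Tm.map ⇑phi)
        * (((List.range (k+1)).map (fun j => Btil.map ⇑(psi phi j))).prod)
        * (Ti.map ⇑(psi phi k)) := by
  induction k with
  | zero =>
    simp only [List.range_succ, List.range_zero, List.nil_append, List.map_cons, List.map_nil,
      List.prod_cons, List.prod_nil, mul_one]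
    have : ∀ M : Matrix (Fin d) (Fin d) (RatFunc K), M.map ⇑(psi phi 0) = M := fun M =>
      Matrix.map_id M
    rw [this, this, this]
  | succ k ih =>
    have hmapmul : ∀ (M N : Matrix (Fin d) (Fin d) (RatFunc K)) (j : ℕ),
        (M * N).map ⇑(psi phi j) = M.map ⇑(psi phi j) * N.map ⇑(psi phi j) := fun M N j =>
      Matrix.map_mul (f := psi phi j)
    have hkey : ((Tm.map ⇑phi) * Btil * Ti).map ⇑(psi phi (k+1))
        = Tm.map ⇑(psi phi k) * Btil.map ⇑(psi phi (k+1)) * Ti.map ⇑(psi phi (k+1)) := by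
      rw [hmapmul, hmapmul, Matrix.map_map]
      congr 2
      funext i j
      exact psi_phi phi k (Tm i j)
    rw [List.range_succ, List.map_append, List.prod_append, List.map_cons, List.map_nil,
      List.prod_cons, List.prod_nil, mul_one, ih, hkey]
    have hone : (Ti.map ⇑(psi phi k)) * (Tm.map ⇑(psi phi k)) = 1 := by
      rw [← hmapmul, hTi]
      exact Matrix.map_one _ (map_zero _) (map_one _)
    calc Tm.map ⇑phi * ((List.range (k+1)).map (fun j => Btil.map ⇑(psi phi j))).prod
          * Ti.map ⇑(psi phi k)
          * (Tm.map ⇑(psi phi k) * Btil.map ⇑(psi phi (k+1)) * Ti.map ⇑(psi phi (k+1)))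
        = Tm.map ⇑phi * ((List.range (k+1)).map (fun j => Btil.map ⇑(psi phi j))).prod
          * ((Ti.map ⇑(psi phi k)) * (Tm.map ⇑(psi phi k)))
          * Btil.map ⇑(psi phi (k+1)) * Ti.map ⇑(psi phi (k+1)) := by
          simp only [mul_assoc]
      _ = Tm.map ⇑phi * (((List.range (k+1)).map (fun j => Btil.map ⇑(psi phi j))).prod
          * Btil.map ⇑(psi phi (k+1))) * Ti.map ⇑(psi phi (k+1)) := by
          rw [hone, mul_one]
          simp only [mul_assoc]
      _ = _ := by
          simp [List.range_succ, List.prod_append, mul_assoc]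

end Stmt8Aux
namespace Stmt8Aux

lemma ordAt_nonneg_of_not_dvd_denom {q : Polynomial K} (hq : Irreducible q) {f : RatFunc K}
    (h : ¬ q ∣ f.denom) : 0 ≤ ordAt q f := by
  by_cases hf : f = 0
  · rw [hf, ordAt_zero]; exact le_top
  · rw [ordAt_spec hq (RatFunc.num_ne_zero hf) (RatFunc.denom_ne_zero f) (num_identity f),
      multiplicity_eq_zero.2 h]
    rw [show (0 : WithTop ℤ) = ((0:ℤ) : WithTop ℤ) from rfl, WithTop.coe_le_coe]
    omega

lemma one_le_coe_add {n : ℕ} {x : WithTop ℤ} (h : (((-(n : ℤ)) : ℤ) : WithTop ℤ) < x) :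
    (1 : WithTop ℤ) ≤ (((n : ℕ) : ℤ) : WithTop ℤ) + x := by
  induction x using WithTop.recTopCoe with
  | top => rw [add_top]; exact le_top
  | coe v =>
    rw [WithTop.coe_lt_coe] at h
    have : (1 : ℤ) ≤ (n : ℤ) + v := by omega
    rw [← WithTop.coe_add]
    exact_mod_cast this

lemma denom_dvd_denMat {d : ℕ} (A : Matrix (Fin d) (Fin d) (RatFunc K)) (i j : Fin d) :
    (A i j).denom ∣ denMat A :=
  dvd_trans (Finset.dvd_prod_of_mem (fun j' => (A i j').denom) (Finset.mem_univ j))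
    (Finset.dvd_prod_of_mem (fun i' => ∏ j', (A i' j').denom) (Finset.mem_univ i))

lemma matOrdAt_nonneg_of_not_dvd_denMat {d : ℕ} {q : Polynomial K} (hq : Irreducible q)
    {A : Matrix (Fin d) (Fin d) (RatFunc K)} (h : ¬ q ∣ denMat A) :
    0 ≤ matOrdAt q A :=
  le_matOrdAt fun i j => ordAt_nonneg_of_not_dvd_denom hq
    (fun hd => h (dvd_trans hd (denom_dvd_denMat A i j)))

end Stmt8Aux

set_option maxHeartbeats 2000000 in
set_option synthInstance.maxHeartbeats 1000000 in
theorem stmt8_aux' (Cs : Subfield ℂ) {d : ℕ}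
    (phi : RatFunc ↥Cs ≃+* RatFunc ↥Cs)
    (hphi : ∀ p : Polynomial ↥Cs, phi (algebraMap (Polynomial ↥Cs) (RatFunc ↥Cs) p)
        = algebraMap (Polynomial ↥Cs) (RatFunc ↥Cs) (p.comp (X + C 1)))
    (q : Polynomial ↥Cs) (hq : Irreducible q)
    (A : Matrix (Fin d) (Fin d) (RatFunc ↥Cs)) (hA : A.det ≠ 0)
    (hmin : PhiMinimalPole q A)
    (n : ℕ) (hn0 : 0 < n) (hn : matOrdAt q A = (-(n : ℤ) : ℤ))
    (Atil : Matrix (Fin d) (Fin d) (RatFunc ↥Cs))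
    (hAtil : Atil = Matrix.of fun i j => algebraMap (Polynomial ↥Cs) (RatFunc ↥Cs) (q ^ n) * A i j)
    (Tp : Matrix (Fin d) (Fin d) (Polynomial ↥Cs))
    (hTdet : (Tp.map (algebraMap (Polynomial ↥Cs) (RatFunc ↥Cs))).det ≠ 0)
    (hqT : q ∣ Tp.det)
    (hdesing : matOrdAt q A < matOrdAt q (gaugeT phi Tp A))
    (hother : ∀ p : Polynomial ↥Cs, Irreducible p → matOrdAt p A ≤ matOrdAt p (gaugeT phi Tp A)) :
    ∃ k : ℕ, 1 ≤ k ∧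
      matPiAt q hq (((List.range (k + 1)).map fun j => Atil.map ((⇑phi.symm)^[j])).prod) = 0 := by
  classical
  open Stmt8Aux in
  set alg := algebraMap (Polynomial ↥Cs) (RatFunc ↥Cs) with halg
  set Tm : Matrix (Fin d) (Fin d) (RatFunc ↥Cs) := Tp.map ⇑alg with hTm
  set B := gaugeT phi Tp A with hB
  have hTu : IsUnit Tm.det := isUnit_iff_ne_zero.2 hTdet
  have hTi : Tm⁻¹ * Tm = 1 := Matrix.nonsing_inv_mul Tm hTu
  have hTi' : Tm * Tm⁻¹ = 1 := Matrix.mul_nonsing_inv Tm hTu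
  -- A = φ(T) B T⁻¹
  have hA_dec : A = (Tm.map ⇑phi) * B * Tm⁻¹ := by
    rw [hB, gaugeT]
    rw [show ((Tp.map ⇑alg)⁻¹.map ⇑phi) = (Tm⁻¹.map ⇑phi) from rfl]
    calc A = 1 * A * 1 := by rw [one_mul, mul_one]
      _ = ((Tm * Tm⁻¹).map ⇑(phi : RatFunc ↥Cs →+* RatFunc ↥Cs)) * A * (Tm * Tm⁻¹) := by
          rw [hTi']
          rw [Matrix.map_one _ (map_zero _) (map_one _)]
      _ = (Tm.map ⇑phi) * ((Tm⁻¹.map ⇑phi) * A * Tm) * Tm⁻¹ := by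
          rw [Matrix.map_mul]
          simp only [mul_assoc]
          rfl
  set c : RatFunc ↥Cs := alg (q ^ n) with hc
  set Btil : Matrix (Fin d) (Fin d) (RatFunc ↥Cs) := Matrix.of (fun i j => c * B i j) with hBtil
  have hAtil_dec : Atil = (Tm.map ⇑phi) * Btil * Tm⁻¹ := by
    rw [hA_dec] at hAtil
    rw [hAtil]
    ext i j
    simp only [Matrix.of_apply, Matrix.mul_apply, Finset.mul_sum, Finset.sum_mul, hBtil]
    refine Finset.sum_congr rfl fun k2 _ => ?_
    refine Finset.sum_congr rfl fun k1 _ => ?_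
    ring
  -- choose k beyond all shifts dividing det Tp
  have hD : Tp.det ≠ 0 := by
    intro h
    apply hTdet
    have h2 := RingHom.map_det alg Tp
    rw [RingHom.mapMatrix_apply] at h2
    rw [hTm, ← h2, h, map_zero]
  set ι : ↥Cs →+* ℂ := Cs.subtype with hι
  have hιinj : Function.Injective ι := ι.injective
  set Dc : Polynomial ℂ := Tp.det.map ι with hDcdef
  have hDc0 : Dc ≠ 0 := (Polynomial.map_ne_zero_iff hιinj).2 hD
  have hqdeg : 0 < (q.map ι).degree := by
    rw [Polynomial.degree_map_eq_of_injective hιinj]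
    exact Polynomial.degree_pos_of_irreducible hq
  obtain ⟨α, hα⟩ := Complex.exists_root hqdeg
  have hroot : ∀ j : ℕ, shiftPoly j q ∣ Tp.det → (α - (j : ℂ)) ∈ Dc.roots := by
    intro j hj
    have hdvd : (shiftPoly j q).map ι ∣ Dc := Polynomial.map_dvd ι hj
    have heval : ((shiftPoly j q).map ι).eval (α - (j : ℂ)) = 0 := by
      have h1 : (X + C ((j : ℕ) : ↥Cs)).map ι = X + C ((j : ℕ) : ℂ) := by
        rw [Polynomial.map_add, Polynomial.map_X, Polynomial.map_C, map_natCast]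
      rw [shiftPoly, Polynomial.map_comp, h1, Polynomial.eval_comp, Polynomial.eval_add,
        Polynomial.eval_X, Polynomial.eval_C, sub_add_cancel]
      exact hα
    rw [Polynomial.mem_roots hDc0]
    obtain ⟨c0, hc0⟩ := hdvd
    show Dc.eval _ = 0
    rw [hc0, Polynomial.eval_mul, heval, zero_mul]
  have hSfin : {j : ℕ | shiftPoly j q ∣ Tp.det}.Finite := by
    have hsub : {j : ℕ | shiftPoly j q ∣ Tp.det} ⊆
        (fun j : ℕ => α - (j : ℂ)) ⁻¹' ((Dc.roots.toFinset : Finset ℂ) : Set ℂ) := by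
      intro j hj
      simp only [Set.mem_preimage, Finset.mem_coe, Multiset.mem_toFinset]
      exact hroot j hj
    refine Set.Finite.subset (Set.Finite.preimage ?_
      ((Dc.roots.toFinset : Finset ℂ) : Set ℂ).toFinite) hsub
    intro a _ b _ hab
    have h2 : ((a : ℕ) : ℂ) = ((b : ℕ) : ℂ) := by
      have h3 : α - ((a : ℕ) : ℂ) = α - ((b : ℕ) : ℂ) := hab
      linear_combination -h3
    exact_mod_cast h2
  set k := hSfin.toFinset.sup id + 1 with hkdef
  have hk1 : 1 ≤ k := Nat.le_add_left 1 _
  have hknot : ¬ shiftPoly k q ∣ Tp.det := by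
    intro h
    have hmem : k ∈ hSfin.toFinset := hSfin.mem_toFinset.2 h
    have := Finset.le_sup (f := id) hmem
    simp only [id] at this
    omega
  -- order bounds
  have hTmphi : (0 : WithTop ℤ) ≤ matOrdAt q (Tm.map ⇑phi) := by
    refine le_matOrdAt fun i j => ?_
    rw [hTm, Matrix.map_map]
    rw [Matrix.map_apply]
    show (0 : WithTop ℤ) ≤ ordAt q (phi (alg (Tp i j)))
    rw [hphi]
    exact ordAt_poly_nonneg hq _
  have hBq : ∀ a b, (((-(n : ℤ)) : ℤ) : WithTop ℤ) < ordAt q (B a b) := fun a b =>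
    lt_of_lt_of_le (hn ▸ hdesing) (matOrdAt_le_entry B a b)
  have hBtil0 : (1 : WithTop ℤ) ≤ matOrdAt q (Btil.map ⇑(psi phi 0)) := by
    refine le_matOrdAt fun a b => ?_
    rw [Matrix.map_apply]
    show (1 : WithTop ℤ) ≤ ordAt q (psi phi 0 (Btil a b))
    rw [show psi phi 0 (Btil a b) = Btil a b from rfl, hBtil, Matrix.of_apply, ordAt_mul hq, hc,
      ordAt_algebraMap hq (pow_ne_zero n hq.ne_zero), multiplicity_pow_self_of_prime (irr_prime hq)]
    exact one_le_coe_add (hBq a b)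
  have hBtilj : ∀ j : ℕ, (0 : WithTop ℤ) ≤ matOrdAt q (Btil.map ⇑(psi phi (j + 1))) := by
    intro j
    have hqj : Irreducible (shiftPoly (j + 1) q) := shiftPoly_irreducible hq (j + 1)
    have hnd : ¬ shiftPoly (j + 1) q ∣ denMat A := hmin.2 (j + 1) (Nat.le_add_left 1 j)
    have hA0 : 0 ≤ matOrdAt (shiftPoly (j + 1) q) A := matOrdAt_nonneg_of_not_dvd_denMat hqj hnd
    have hB0 : 0 ≤ matOrdAt (shiftPoly (j + 1) q) B := le_trans hA0 (hother _ hqj)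
    have hcj : ordAt (shiftPoly (j + 1) q) c = ((0 : ℤ) : WithTop ℤ) := by
      rw [hc, ordAt_algebraMap hqj (pow_ne_zero n hq.ne_zero),
        multiplicity_eq_zero.2 (fun hdvd => hnd (dvd_trans ((irr_prime hqj).dvd_of_dvd_pow hdvd) hmin.1))]
      norm_num
    refine le_matOrdAt fun a b => ?_
    rw [Matrix.map_apply, ordAt_psi hphi hq (j + 1) (Btil a b), hBtil, Matrix.of_apply,
      ordAt_mul hqj, hcj]
    calc (0 : WithTop ℤ) = ((0 : ℤ) : WithTop ℤ) + 0 := by norm_num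
      _ ≤ _ := add_le_add le_rfl (le_trans hB0 (matOrdAt_le_entry B a b))
  have hTinv : (0 : WithTop ℤ) ≤ matOrdAt q (Tm⁻¹.map ⇑(psi phi k)) := by
    have hqk : Irreducible (shiftPoly k q) := shiftPoly_irreducible hq k
    have hadjmat : Tm.adjugate = (Tp.adjugate).map ⇑alg := by
      have h2 := RingHom.map_adjugate alg Tp
      rw [RingHom.mapMatrix_apply, RingHom.mapMatrix_apply] at h2
      rw [hTm, ← h2]
    have hdetm : Tm.det = alg Tp.det := by
      have h2 := RingHom.map_det alg Tp
      rw [RingHom.mapMatrix_apply] at h2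
      rw [hTm, ← h2]
    refine le_matOrdAt fun a b => ?_
    rw [Matrix.map_apply, ordAt_psi hphi hq k (Tm⁻¹ a b)]
    have hadj : Tm⁻¹ a b * alg Tp.det = alg (Tp.adjugate a b) := by
      rw [Matrix.inv_def, Matrix.smul_apply, hadjmat, Matrix.map_apply, smul_eq_mul, ← hdetm,
        Ring.inverse_eq_inv', mul_comm Tm.det⁻¹ _, mul_assoc, inv_mul_cancel₀ hTdet, mul_one]
    by_cases hz : Tp.adjugate a b = 0
    · have hz2 : Tm⁻¹ a b = 0 := by
        rw [hz, map_zero] at hadj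
        exact (mul_eq_zero.1 hadj).resolve_right (RatFunc.algebraMap_ne_zero hD)
      rw [hz2, ordAt_zero]
      exact le_top
    · rw [ordAt_spec hqk hz hD hadj, multiplicity_eq_zero.2 hknot]
      rw [show (0 : WithTop ℤ) = ((0 : ℤ) : WithTop ℤ) from rfl, WithTop.coe_le_coe]
      omega
  set Qprod := ((List.range (k + 1)).map (fun j => Btil.map ⇑(psi phi j))).prod with hQdef
  have hQ : (1 : WithTop ℤ) ≤ matOrdAt q Qprod := by
    rw [hQdef, List.range_succ_eq_map, List.map_cons, List.prod_cons]
    have hrest : (0 : WithTop ℤ) ≤ matOrdAt q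
        (((List.range k).map Nat.succ).map (fun j => Btil.map ⇑(psi phi j))).prod := by
      refine matOrdAt_list_prod_nonneg hq _ fun M hM => ?_
      rw [List.mem_map] at hM
      obtain ⟨j', hj', rfl⟩ := hM
      rw [List.mem_map] at hj'
      obtain ⟨j, _, rfl⟩ := hj'
      exact hBtilj j
    calc (1 : WithTop ℤ) = 1 + 0 := by rw [add_zero]
      _ ≤ matOrdAt q (Btil.map ⇑(psi phi 0)) + matOrdAt q
          (((List.range k).map Nat.succ).map (fun j => Btil.map ⇑(psi phi j))).prod :=
        add_le_add hBtil0 hrest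
      _ ≤ _ := matOrdAt_mul hq _ _
  have hP : (1 : WithTop ℤ) ≤ matOrdAt q ((Tm.map ⇑phi) * Qprod * (Tm⁻¹.map ⇑(psi phi k))) := by
    calc (1 : WithTop ℤ) = 0 + 1 + 0 := by norm_num
      _ ≤ (matOrdAt q (Tm.map ⇑phi) + matOrdAt q Qprod) + matOrdAt q (Tm⁻¹.map ⇑(psi phi k)) :=
        add_le_add (add_le_add hTmphi hQ) hTinv
      _ ≤ matOrdAt q ((Tm.map ⇑phi) * Qprod) + matOrdAt q (Tm⁻¹.map ⇑(psi phi k)) :=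
        add_le_add (matOrdAt_mul hq _ _) le_rfl
      _ ≤ _ := matOrdAt_mul hq _ _
  refine ⟨k, hk1, ?_⟩
  have hgoal : ((List.range (k + 1)).map fun j => Atil.map ((⇑phi.symm)^[j])).prod
      = (Tm.map ⇑phi) * Qprod * (Tm⁻¹.map ⇑(psi phi k)) := by
    simp only [← psi_coe phi]
    rw [hAtil_dec, hQdef]
    exact tele phi Tm Btil Tm⁻¹ hTi k
  rw [hgoal]
  ext a b
  rw [matPiAt, Matrix.of_apply, Matrix.zero_apply]
  refine piAt_eq_zero hq (lt_of_lt_of_le ?_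
    (le_trans hP (matOrdAt_le_entry _ a b)))
  norm_num

theorem stmt8 (Cs : Subfield ℂ) {d : ℕ}
    (phi : RatFunc ↥Cs ≃+* RatFunc ↥Cs)
    (hphi : ∀ p : Polynomial ↥Cs, phi (algebraMap (Polynomial ↥Cs) (RatFunc ↥Cs) p)
        = algebraMap (Polynomial ↥Cs) (RatFunc ↥Cs) (p.comp (X + C 1)))
    (q : Polynomial ↥Cs) (hq : Irreducible q)
    (A : Matrix (Fin d) (Fin d) (RatFunc ↥Cs)) (hA : A.det ≠ 0)
    (hmin : PhiMinimalPole q A)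
    (n : ℕ) (hn0 : 0 < n) (hn : matOrdAt q A = (-(n : ℤ) : ℤ))
    (Atil : Matrix (Fin d) (Fin d) (RatFunc ↥Cs))
    (hAtil : Atil = Matrix.of fun i j => algebraMap (Polynomial ↥Cs) (RatFunc ↥Cs) (q ^ n) * A i j)
    (Tp : Matrix (Fin d) (Fin d) (Polynomial ↥Cs))
    (hTdet : (Tp.map (algebraMap (Polynomial ↥Cs) (RatFunc ↥Cs))).det ≠ 0)
    (hqT : q ∣ Tp.det)
    (hdesing : matOrdAt q A < matOrdAt q (gaugeT phi Tp A))
    (hother : ∀ p : Polynomial ↥Cs, Irreducible p → matOrdAt p A ≤ matOrdAt p (gaugeT phi Tp A)) :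
    ∃ k : ℕ, 1 ≤ k ∧
      matPiAt q hq (((List.range (k + 1)).map fun j => Atil.map ((⇑phi.symm)^[j])).prod) = 0 :=
  stmt8_aux' Cs phi hphi q hq A hA hmin n hn0 hn Atil hAtil Tp hTdet hqT hdesing hother
end
end

section
/- Let A ∈ GL_d(C(z)) and T = S₁D₁⋯SₙDₙ be a product of unimodular polynomial matrices Sᵢ and diagonal matrices Dᵢ = diag(qᵢ·I_{rᵢ}, I_{d−rᵢ}) such that at each stage i, the partially transformed matrix Aᵢ := (S₁D₁⋯SᵢDᵢ)[A]_φ satisfies the hypotheses of the shearing lemma at qᵢ (namely Aᵢ₋₁ is in column-reduced form at qᵢ with leading-matrix rank rᵢ). Then any other desingularizing transformation T' of [A]_φ at q factors as T' = T·T̃ with T̃ a polynomial matrix in GL_d(C(z)). -/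
open Polynomial Matrix

noncomputable section
open scoped Classical

variable {K : Type*} [Field K]

/-! ### Auxiliary material for the proof -/

section Aux

variable {K : Type*} [Field K]

/-- `f` is integral at `q`: `q` does not divide its denominator. -/
def Intg (q : Polynomial K) (f : RatFunc K) : Prop := ¬ q ∣ f.denom

variable {q : Polynomial K}

lemma intg_algebraMap (hq : Irreducible q) (p : Polynomial K) :
    Intg q (algebraMap (Polynomial K) (RatFunc K) p) := by
  rw [Intg, RatFunc.denom_algebraMap]
  exact fun h => hq.not_isUnit (isUnit_of_dvd_one h)

lemma intg_zero (hq : Irreducible q) : Intg q (0 : RatFunc K) := by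
  simpa using intg_algebraMap hq 0

lemma Intg.add (hq : Irreducible q) {f g : RatFunc K} (hf : Intg q f) (hg : Intg q g) :
    Intg q (f + g) := fun h =>
  ((hq.prime.dvd_mul.mp (h.trans (RatFunc.denom_add_dvd f g))).elim hf hg)

lemma Intg.mul (hq : Irreducible q) {f g : RatFunc K} (hf : Intg q f) (hg : Intg q g) :
    Intg q (f * g) := fun h =>
  ((hq.prime.dvd_mul.mp (h.trans (RatFunc.denom_mul_dvd f g))).elim hf hg)

lemma intg_sum {ι : Type*} (hq : Irreducible q) (s : Finset ι) (g : ι → RatFunc K)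
    (h : ∀ i ∈ s, Intg q (g i)) : Intg q (∑ i ∈ s, g i) := by
  classical
  induction s using Finset.cons_induction with
  | empty => simpa using intg_zero hq
  | cons a s ha ih =>
      rw [Finset.sum_cons]
      exact Intg.add hq (h a (Finset.mem_cons_self a s))
        (ih fun i hi => h i (Finset.mem_cons_of_mem hi))

lemma eval₂_denom_ne (hq : Irreducible q) {f : RatFunc K} (hf : Intg q f) :
    Polynomial.eval₂ (algebraMap K (AdjoinRoot q)) (AdjoinRoot.root q) f.denom ≠ 0 := by
  rw [← Polynomial.aeval_def, AdjoinRoot.aeval_eq]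
  exact fun h => hf (AdjoinRoot.mk_eq_zero.mp h)

lemma piAt_eval (hq : Irreducible q) (f : RatFunc K) :
    piAt q hq f =
      haveI : Fact (Irreducible q) := ⟨hq⟩
      RatFunc.eval (algebraMap K (AdjoinRoot q)) (AdjoinRoot.root q) f := by
  haveI : Fact (Irreducible q) := ⟨hq⟩
  show AdjoinRoot.mk q f.num * (AdjoinRoot.mk q f.denom)⁻¹ = _
  rw [RatFunc.eval, div_eq_mul_inv, ← Polynomial.aeval_def, ← Polynomial.aeval_def,
    AdjoinRoot.aeval_eq, AdjoinRoot.aeval_eq]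

lemma piAt_add (hq : Irreducible q) {f g : RatFunc K} (hf : Intg q f) (hg : Intg q g) :
    piAt q hq (f + g) = piAt q hq f + piAt q hq g := by
  haveI : Fact (Irreducible q) := ⟨hq⟩
  rw [piAt_eval, piAt_eval, piAt_eval]
  exact RatFunc.eval_add (f := algebraMap K (AdjoinRoot q)) (a := AdjoinRoot.root q) (eval₂_denom_ne hq hf) (eval₂_denom_ne hq hg)

lemma piAt_mul (hq : Irreducible q) {f g : RatFunc K} (hf : Intg q f) (hg : Intg q g) :
    piAt q hq (f * g) = piAt q hq f * piAt q hq g := by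
  haveI : Fact (Irreducible q) := ⟨hq⟩
  rw [piAt_eval, piAt_eval, piAt_eval]
  exact RatFunc.eval_mul (f := algebraMap K (AdjoinRoot q)) (a := AdjoinRoot.root q) (eval₂_denom_ne hq hf) (eval₂_denom_ne hq hg)

lemma piAt_zero (hq : Irreducible q) : piAt q hq 0 = 0 := by
  haveI : Fact (Irreducible q) := ⟨hq⟩
  show AdjoinRoot.mk q (RatFunc.num 0) * (AdjoinRoot.mk q (RatFunc.denom 0))⁻¹ = 0
  rw [RatFunc.num_zero, map_zero, zero_mul]

lemma piAt_sum {ι : Type*} (hq : Irreducible q) (s : Finset ι) (g : ι → RatFunc K)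
    (h : ∀ i ∈ s, Intg q (g i)) :
    piAt q hq (∑ i ∈ s, g i) = ∑ i ∈ s, piAt q hq (g i) := by
  classical
  induction s using Finset.cons_induction with
  | empty => simpa using piAt_zero hq
  | cons a s ha ih =>
      rw [Finset.sum_cons, Finset.sum_cons,
        piAt_add hq (h a (Finset.mem_cons_self a s))
          (intg_sum hq _ _ fun i hi => h i (Finset.mem_cons_of_mem hi)),
        ih fun i hi => h i (Finset.mem_cons_of_mem hi)]

lemma piAt_algebraMap (hq : Irreducible q) (p : Polynomial K) :
    piAt q hq (algebraMap (Polynomial K) (RatFunc K) p) = AdjoinRoot.mk q p := by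
  haveI : Fact (Irreducible q) := ⟨hq⟩
  show AdjoinRoot.mk q (RatFunc.num _) * (AdjoinRoot.mk q (RatFunc.denom _))⁻¹ = _
  rw [RatFunc.num_algebraMap, RatFunc.denom_algebraMap, _root_.map_one, inv_one, mul_one]

lemma piAt_qpow_mul (hq : Irreducible q) {n : ℕ} (hn : 0 < n) {c : RatFunc K}
    (hc : Intg q c) :
    piAt q hq (algebraMap (Polynomial K) (RatFunc K) (q ^ n) * c) = 0 := by
  haveI : Fact (Irreducible q) := ⟨hq⟩
  rw [piAt_mul hq (intg_algebraMap hq _) hc, piAt_algebraMap, map_pow, AdjoinRoot.mk_self,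
    zero_pow hn.ne', zero_mul]

lemma ordAt_nonneg_iff (hq : Irreducible q) (f : RatFunc K) :
    0 ≤ ordAt q f ↔ ¬ q ∣ f.denom := by
  unfold ordAt
  split_ifs with h0
  · subst h0
    rw [RatFunc.denom_zero]
    simp only [le_top, true_iff]
    exact fun h => hq.not_isUnit (isUnit_of_dvd_one h)
  · constructor
    · intro hle hdvd
      have hnum : multiplicity q f.num = 0 :=
        multiplicity_eq_zero.mpr fun hn =>
          hq.not_isUnit ((RatFunc.isCoprime_num_denom f).isUnit_of_dvd' hn hdvd)
      have hden : 0 < multiplicity q f.denom := multiplicity_pos_of_dvd hdvd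
      rw [hnum] at hle
      have h2 : (0 : ℤ) ≤ (((0 : ℕ) : ℤ) - (multiplicity q f.denom : ℤ)) := by
        exact_mod_cast hle
      omega
    · intro hnd
      have hden : multiplicity q f.denom = 0 := multiplicity_eq_zero.mpr hnd
      rw [hden]
      have h2 : (0 : ℤ) ≤ ((multiplicity q f.num : ℤ) - ((0 : ℕ) : ℤ)) := by
        simp
      exact_mod_cast h2

lemma ordAt_intg_pow_mul (hq : Irreducible q) {n : ℕ} {f : RatFunc K}
    (h : ((-(n : ℤ) : ℤ) : WithTop ℤ) ≤ ordAt q f) :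
    Intg q (algebraMap (Polynomial K) (RatFunc K) (q ^ n) * f) := by
  rcases eq_or_ne f 0 with rfl | hf0
  · rw [mul_zero]; exact intg_zero hq
  by_cases hd : q ∣ f.denom
  · have hnum : ¬ q ∣ f.num := fun hn =>
      hq.not_isUnit ((RatFunc.isCoprime_num_denom f).isUnit_of_dvd' hn hd)
    have hmul0 : multiplicity q f.num = 0 := multiplicity_eq_zero.mpr hnum
    have hfin : FiniteMultiplicity q f.denom :=
      FiniteMultiplicity.of_not_isUnit hq.not_isUnit (RatFunc.denom_ne_zero f)
    set k := multiplicity q f.denom with hk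
    have hkn : k ≤ n := by
      rw [ordAt, if_neg hf0, hmul0] at h
      have h2 : -(n : ℤ) ≤ (((0 : ℕ) : ℤ) - (k : ℤ)) := by exact_mod_cast h
      omega
    obtain ⟨b, hb, hqb⟩ := hfin.exists_eq_pow_mul_and_not_dvd
    rw [← hk] at hb
    have hbne : b ≠ 0 := by
      intro h0; apply RatFunc.denom_ne_zero f; rw [hb, h0, mul_zero]
    have hpoly : q ^ n * f.num * b = q ^ (n - k) * f.num * (q ^ k * b) := by
      rw [show q ^ (n - k) * f.num * (q ^ k * b) = q ^ (n - k) * q ^ k * (f.num * b) by ring,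
        pow_sub_mul_pow q hkn]
      ring
    have key : algebraMap (Polynomial K) (RatFunc K) (q ^ n) * f
        = algebraMap (Polynomial K) (RatFunc K) (q ^ (n - k) * f.num)
            / algebraMap (Polynomial K) (RatFunc K) b := by
      rw [eq_div_iff (RatFunc.algebraMap_ne_zero hbne)]
      conv_lhs => rw [← RatFunc.num_div_denom f, hb]
      rw [mul_comm (algebraMap (Polynomial K) (RatFunc K) (q ^ n)), div_mul_eq_mul_div,
        div_mul_eq_mul_div, div_eq_iff (RatFunc.algebraMap_ne_zero (hb ▸ RatFunc.denom_ne_zero f))]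
      rw [← _root_.map_mul, ← _root_.map_mul, ← _root_.map_mul]
      exact congrArg _ (by linear_combination hpoly)
    intro hc
    exact hqb (dvd_trans hc (key ▸ RatFunc.denom_div_dvd _ _))
  · intro hc
    refine hd (dvd_trans hc ?_)
    have key : algebraMap (Polynomial K) (RatFunc K) (q ^ n) * f
        = algebraMap (Polynomial K) (RatFunc K) (q ^ n * f.num)
            / algebraMap (Polynomial K) (RatFunc K) f.denom := by
      conv_lhs => rw [← RatFunc.num_div_denom f]
      rw [_root_.map_mul, mul_div_assoc]
    rw [key]
    exact RatFunc.denom_div_dvd _ _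

lemma matOrdAt_nonneg_iff {d : ℕ} (q : Polynomial K) (M : Matrix (Fin d) (Fin d) (RatFunc K)) :
    0 ≤ matOrdAt q M ↔ ∀ i j, 0 ≤ ordAt q (M i j) := by
  unfold matOrdAt
  rw [Finset.le_inf_iff]
  exact ⟨fun h i j => h (i, j) (Finset.mem_univ _), fun h ij _ => h ij.1 ij.2⟩

lemma matOrdAt_le_entry {d : ℕ} (q : Polynomial K) (M : Matrix (Fin d) (Fin d) (RatFunc K))
    (i j : Fin d) : matOrdAt q M ≤ ordAt q (M i j) :=
  Finset.inf_le (Finset.mem_univ (i, j))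

lemma shiftPoly_zero (p : Polynomial K) : shiftPoly 0 p = p := by
  unfold shiftPoly
  rw [Nat.cast_zero, Polynomial.C_0, add_zero, Polynomial.comp_X]

/-! matrix plumbing -/

lemma det_map_algebraMap {d : ℕ} (P : Matrix (Fin d) (Fin d) (Polynomial K)) :
    (P.map (algebraMap (Polynomial K) (RatFunc K))).det
      = algebraMap (Polynomial K) (RatFunc K) P.det := by
  rw [← RingHom.mapMatrix_apply, ← RingHom.map_det]

lemma irred_prime (hq : Irreducible q) : Prime q := hq.prime

lemma mp_mul {d : ℕ} (P Q : Matrix (Fin d) (Fin d) (Polynomial K)) :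
    (P * Q).map (algebraMap (Polynomial K) (RatFunc K))
      = P.map (algebraMap (Polynomial K) (RatFunc K))
        * Q.map (algebraMap (Polynomial K) (RatFunc K)) :=
  Matrix.map_mul

lemma mp_one {d : ℕ} :
    (1 : Matrix (Fin d) (Fin d) (Polynomial K)).map (algebraMap (Polynomial K) (RatFunc K))
      = 1 :=
  Matrix.map_one _ (map_zero _) (map_one _)

lemma phimat_mul {d : ℕ} (phi : RatFunc K ≃+* RatFunc K)
    (M N : Matrix (Fin d) (Fin d) (RatFunc K)) :
    (M * N).map ⇑phi = M.map ⇑phi * N.map ⇑phi := by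
  have h := Matrix.map_mul (L := M) (M := N) (f := (phi : RatFunc K →+* RatFunc K))
  simpa using h

lemma phimat_one {d : ℕ} (phi : RatFunc K ≃+* RatFunc K) :
    (1 : Matrix (Fin d) (Fin d) (RatFunc K)).map ⇑phi = 1 :=
  Matrix.map_one _ (map_zero phi) (map_one phi)

lemma gaugeT_mul {d : ℕ} (phi : RatFunc K ≃+* RatFunc K)
    (P Q : Matrix (Fin d) (Fin d) (Polynomial K)) (M : Matrix (Fin d) (Fin d) (RatFunc K)) :
    gaugeT phi (P * Q) M = gaugeT phi Q (gaugeT phi P M) := by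
  unfold gaugeT
  rw [mp_mul, Matrix.mul_inv_rev, phimat_mul]
  simp only [Matrix.mul_assoc]

lemma mat_inv_one {d : ℕ} : (1 : Matrix (Fin d) (Fin d) (RatFunc K))⁻¹ = 1 :=
  Matrix.inv_eq_right_inv (by rw [Matrix.one_mul])

lemma gaugeT_one {d : ℕ} (phi : RatFunc K ≃+* RatFunc K)
    (M : Matrix (Fin d) (Fin d) (RatFunc K)) : gaugeT phi 1 M = M := by
  unfold gaugeT
  rw [mp_one, mat_inv_one, phimat_one, Matrix.one_mul, Matrix.mul_one]

lemma intg_matmul3 (hq : Irreducible q) {d : ℕ}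
    (P M Q : Matrix (Fin d) (Fin d) (RatFunc K))
    (hP : ∀ x y, Intg q (P x y)) (hM : ∀ x y, Intg q (M x y))
    (hQ : ∀ x y, Intg q (Q x y)) :
    ∀ x y, Intg q ((P * M * Q) x y) := by
  have h2 : ∀ x y, Intg q ((P * M) x y) := by
    intro x y
    rw [Matrix.mul_apply]
    exact intg_sum hq _ _ fun k _ => Intg.mul hq (hP x k) (hM k y)
  intro x y
  rw [Matrix.mul_apply]
  exact intg_sum hq _ _ fun k _ => Intg.mul hq (h2 x k) (hQ k y)

/-! the rank argument -/

lemma rank_cols_zero {F : Type*} [Field F] {d r : ℕ} (L : Matrix (Fin d) (Fin d) F)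
    (hcols : ∀ x y : Fin d, r ≤ (y : ℕ) → L x y = 0) (hrank : L.rank = r)
    (v : Fin d → F) (hv : L.mulVec v = 0) : ∀ k : Fin d, (k : ℕ) < r → v k = 0 := by
  classical
  have hrd : r ≤ d := hrank ▸ L.rank_le_width
  let ι := {k : Fin d // (k : ℕ) < r}
  let e : ι ≃ Fin r :=
    { toFun := fun k => ⟨(k : Fin d), k.2⟩
      invFun := fun i => ⟨⟨i, lt_of_lt_of_le i.2 hrd⟩, i.2⟩
      left_inv := fun k => by ext; rfl
      right_inv := fun i => rfl }
  have hcard : Fintype.card ι = r := by rw [Fintype.card_congr e, Fintype.card_fin]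
  let col : Fin d → (Fin d → F) := fun k => Lᵀ k
  have hzero : ∀ k : Fin d, r ≤ (k : ℕ) → col k = 0 := fun k hk =>
    funext fun x => hcols x k hk
  have hsubset1 : Set.range col ⊆ insert (0 : Fin d → F)
      (Set.range fun k : ι => col k.1) := by
    rintro _ ⟨k, rfl⟩
    by_cases h : (k : ℕ) < r
    · exact Set.mem_insert_of_mem _ ⟨⟨k, h⟩, rfl⟩
    · rw [hzero k (le_of_not_gt h)]; exact Set.mem_insert _ _
  have hsubset2 : (Set.range fun k : ι => col k.1) ⊆ Set.range col := by
    rintro _ ⟨k, rfl⟩; exact ⟨k.1, rfl⟩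
  have hspan : Submodule.span F (Set.range fun k : ι => col k.1)
      = Submodule.span F (Set.range col) := by
    refine le_antisymm (Submodule.span_mono hsubset2) ?_
    calc Submodule.span F (Set.range col)
        ≤ Submodule.span F (insert (0 : Fin d → F) (Set.range fun k : ι => col k.1)) :=
          Submodule.span_mono hsubset1
      _ = Submodule.span F (Set.range fun k : ι => col k.1) := Submodule.span_insert_zero
  have hli : LinearIndependent F (fun k : ι => col k.1) := by
    rw [linearIndependent_iff_card_eq_finrank_span, hcard, Set.finrank, hspan]
    exact hrank.symm.trans (Matrix.rank_eq_finrank_span_cols L)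
  have hcomb : ∑ k : Fin d, v k • col k = 0 := by
    funext x
    have := congrFun hv x
    rw [Matrix.mulVec, dotProduct] at this
    rw [Finset.sum_apply]
    simpa [col, Matrix.transpose_apply, mul_comm] using this
  have hsum : ∑ k : ι, v k.1 • col k.1 = 0 := by
    have hfilter : ∑ k ∈ Finset.univ.filter (fun k : Fin d => (k : ℕ) < r), v k • col k
        = ∑ k : Fin d, v k • col k := by
      refine Finset.sum_subset (Finset.filter_subset _ _) fun k _ hk => ?_
      have : ¬ (k : ℕ) < r := by simpa using hk
      rw [hzero k (le_of_not_gt this), smul_zero]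
    have hst : ∑ k : ι, v k.1 • col k.1
        = ∑ k ∈ Finset.univ.filter (fun k : Fin d => (k : ℕ) < r), v k • col k := by
      rw [← Finset.sum_subtype (Finset.univ.filter fun k : Fin d => (k : ℕ) < r)
        (fun k => by simp) (fun k => v k • col k)]
    rw [hst, hfilter, hcomb]
  intro k hk
  exact linearIndependent_iff'.mp hli Finset.univ (fun k : ι => v k.1) hsum ⟨k, hk⟩
    (Finset.mem_univ _)

/-! the shearing-type key lemma: rows of any integrating `V` are divisible by `q` -/

lemma key_rows {d : ℕ} (phi : RatFunc K ≃+* RatFunc K)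
    (hphi : ∀ p : Polynomial K, phi (algebraMap (Polynomial K) (RatFunc K) p)
      = algebraMap (Polynomial K) (RatFunc K) (p.comp (X + C 1)))
    (hq : Irreducible q) {n r : ℕ} (hn : 0 < n)
    (B : Matrix (Fin d) (Fin d) (RatFunc K))
    (hBord : ∀ x y, ((-(n : ℤ) : ℤ) : WithTop ℤ) ≤ ordAt q (B x y))
    (hcols : ∀ x y : Fin d, r ≤ (y : ℕ) →
      piAt q hq (algebraMap (Polynomial K) (RatFunc K) q ^ (n : ℤ) * B x y) = 0)
    (hrank : (lcAt q hq (n : ℤ) B).rank = r)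
    (V : Matrix (Fin d) (Fin d) (Polynomial K))
    (hVdet : (V.map (algebraMap (Polynomial K) (RatFunc K))).det ≠ 0)
    (hC : ∀ x y, Intg q ((gaugeT phi V B) x y)) :
    ∀ x y : Fin d, (x : ℕ) < r → q ∣ V x y := by
  classical
  haveI : Fact (Irreducible q) := ⟨hq⟩
  set am := algebraMap (Polynomial K) (RatFunc K) with ham
  set Vr := V.map am with hVr
  set Cm := gaugeT phi V B with hCdef
  have hVunit : IsUnit Vr.det := isUnit_iff_ne_zero.mpr hVdet
  have hVinv : Vr * Vr⁻¹ = 1 := Matrix.mul_nonsing_inv _ hVunit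
  have hE : B * Vr = Vr.map ⇑phi * Cm := by
    rw [hCdef]
    unfold gaugeT
    rw [← hVr]
    simp only [← Matrix.mul_assoc]
    rw [← phimat_mul, hVinv, phimat_one, Matrix.one_mul]
  have hqz : (am q) ^ (n : ℤ) = am (q ^ n) := by rw [zpow_natCast, map_pow]
  have hVic : ∀ a b : Fin d, Intg q (Vr a b) := by
    intro a b; rw [hVr, Matrix.map_apply]; exact intg_algebraMap hq _
  have hBi : ∀ a b : Fin d, Intg q (am (q ^ n) * B a b) := fun a b =>
    ordAt_intg_pow_mul hq (hBord a b)
  have key : ∀ x y : Fin d,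
      ∑ k, piAt q hq (am (q ^ n) * B x k) * AdjoinRoot.mk q (V k y) = 0 := by
    intro x y
    have hEentry : ∑ k, B x k * Vr k y = ∑ k, (Vr.map ⇑phi) x k * Cm k y := by
      have h := congrFun (congrFun hE x) y
      rwa [Matrix.mul_apply, Matrix.mul_apply] at h
    have hmul := congrArg (fun t => am (q ^ n) * t) hEentry
    simp only [Finset.mul_sum] at hmul
    have hL : ∀ k, am (q ^ n) * (B x k * Vr k y) = am (q ^ n) * B x k * Vr k y :=
      fun k => by ring
    have hR : ∀ k, am (q ^ n) * ((Vr.map ⇑phi) x k * Cm k y)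
        = (Vr.map ⇑phi) x k * (am (q ^ n) * Cm k y) := fun k => by ring
    rw [Finset.sum_congr rfl fun k _ => hL k, Finset.sum_congr rfl fun k _ => hR k] at hmul
    have hphiV : ∀ a b : Fin d, (Vr.map ⇑phi) a b = am ((V a b).comp (X + C 1)) := by
      intro a b
      rw [Matrix.map_apply, hVr, Matrix.map_apply, ham, hphi]
    have hintL : ∀ k, Intg q (am (q ^ n) * B x k * Vr k y) := fun k =>
      Intg.mul hq (hBi x k) (hVic k y)
    have hintR : ∀ k, Intg q ((Vr.map ⇑phi) x k * (am (q ^ n) * Cm k y)) := fun k =>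
      Intg.mul hq (by rw [hphiV]; exact intg_algebraMap hq _)
        (Intg.mul hq (intg_algebraMap hq _) (hC k y))
    have hπ := congrArg (piAt q hq) hmul
    rw [piAt_sum hq _ _ fun k _ => hintL k, piAt_sum hq _ _ fun k _ => hintR k] at hπ
    have hRzero : ∀ k, piAt q hq ((Vr.map ⇑phi) x k * (am (q ^ n) * Cm k y)) = 0 := by
      intro k
      rw [piAt_mul hq (by rw [hphiV]; exact intg_algebraMap hq _)
        (Intg.mul hq (intg_algebraMap hq _) (hC k y)), piAt_qpow_mul hq hn (hC k y), mul_zero]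
    rw [Finset.sum_congr rfl fun k _ => hRzero k, Finset.sum_const_zero] at hπ
    have hLsplit : ∀ k, piAt q hq (am (q ^ n) * B x k * Vr k y)
        = piAt q hq (am (q ^ n) * B x k) * AdjoinRoot.mk q (V k y) := by
      intro k
      rw [piAt_mul hq (hBi x k) (hVic k y), hVr, Matrix.map_apply, piAt_algebraMap]
    rw [Finset.sum_congr rfl fun k _ => hLsplit k] at hπ
    exact hπ
  intro x y hx
  have hmk : AdjoinRoot.mk q (V x y) = 0 := by
    set L := lcAt q hq (n : ℤ) B with hLdef
    have hLapp : ∀ a b : Fin d, L a b = piAt q hq (am (q ^ n) * B a b) := by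
      intro a b
      rw [hLdef]
      unfold lcAt matPiAt
      rw [Matrix.of_apply, Matrix.of_apply, hqz]
    have hv : L.mulVec (fun k => AdjoinRoot.mk q (V k y)) = 0 := by
      funext a
      rw [Matrix.mulVec, dotProduct]
      rw [Finset.sum_congr rfl fun k _ => by rw [hLapp a k]]
      exact key a y
    refine rank_cols_zero L (fun a b hb => ?_) hrank _ hv x hx
    rw [hLapp, ← hqz]
    exact hcols a b hb
  exact AdjoinRoot.mk_eq_zero.mp hmk

end Aux

/-- minimality of the desingularizing transformation
`T = S₁D₁⋯SₘDₘ`: every desingularizing transformation `T'` factors as `T·T̃`. -/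
theorem stmt14 (Cs : Subfield ℂ) {d m : ℕ}
    (phi : RatFunc ↥Cs ≃+* RatFunc ↥Cs)
    (hphi : ∀ p : Polynomial ↥Cs, phi (algebraMap (Polynomial ↥Cs) (RatFunc ↥Cs) p)
        = algebraMap (Polynomial ↥Cs) (RatFunc ↥Cs) (p.comp (X + C 1)))
    (q : Polynomial ↥Cs) (hq : Irreducible q)
    (A : Matrix (Fin d) (Fin d) (RatFunc ↥Cs)) (hA : A.det ≠ 0)
    (qs : ℕ → Polynomial ↥Cs) (hqs : ∀ i, qs i = shiftPoly i q)
    (hqirr : ∀ i, Irreducible (qs i))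
    (S : ℕ → Matrix (Fin d) (Fin d) (Polynomial ↥Cs))
    (hS : ∀ i, i < m → IsUnit (S i).det)
    (r : ℕ → ℕ) (n : ℕ → ℕ)
    (D : ℕ → Matrix (Fin d) (Fin d) (Polynomial ↥Cs))
    (hD : ∀ i, i < m → D i = Matrix.diagonal (fun x : Fin d => if (x : ℕ) < r i then qs i else 1))
    (Aseq : ℕ → Matrix (Fin d) (Fin d) (RatFunc ↥Cs))
    (hA0 : Aseq 0 = A)
    (hAstep : ∀ i, i < m → Aseq (i + 1) = gaugeT phi (S i * D i) (Aseq i))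
    (hmin : ∀ i, i < m → PhiMinimalPole (qs i) (Aseq i))
    (hstageord : ∀ i, i < m →
      matOrdAt (qs i) (gaugeT phi (S i) (Aseq i)) = (-(n i : ℤ) : ℤ))
    (hstagecol : ∀ i, i < m → ∀ x y : Fin d, r i ≤ (y : ℕ) →
      piAt (qs i) (hqirr i)
        (algebraMap (Polynomial ↥Cs) (RatFunc ↥Cs) (qs i) ^ (n i : ℤ)
          * (gaugeT phi (S i) (Aseq i)) x y) = 0)
    (hstagerank : ∀ i, i < m →
      (lcAt (qs i) (hqirr i) (n i : ℤ) (gaugeT phi (S i) (Aseq i))).rank = r i)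
    (T' : Matrix (Fin d) (Fin d) (Polynomial ↥Cs))
    (hT'det : (T'.map (algebraMap (Polynomial ↥Cs) (RatFunc ↥Cs))).det ≠ 0)
    (hT'q : 0 ≤ matOrdAt q (gaugeT phi T' A))
    (hT'p : ∀ p : Polynomial ↥Cs, Irreducible p → matOrdAt p A ≤ matOrdAt p (gaugeT phi T' A)) :
    ∃ Tt : Matrix (Fin d) (Fin d) (Polynomial ↥Cs),
      (Tt.map (algebraMap (Polynomial ↥Cs) (RatFunc ↥Cs))).det ≠ 0 ∧
      T' = ((List.range m).map fun i => S i * D i).prod * Tt := by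
  classical
  set am := algebraMap (Polynomial ↥Cs) (RatFunc ↥Cs) with ham
  set Pl : ℕ → Matrix (Fin d) (Fin d) (Polynomial ↥Cs) :=
    fun i => ((List.range i).map fun i => S i * D i).prod with hPl
  have hPl0 : Pl 0 = 1 := by simp [hPl]
  have hPlsucc : ∀ i, Pl (i + 1) = Pl i * (S i * D i) := by
    intro i; simp [hPl, List.range_succ]
  have hAseq : ∀ i, i ≤ m → Aseq i = gaugeT phi (Pl i) A := by
    intro i
    induction i with
    | zero => intro _; rw [hA0, hPl0, gaugeT_one]
    | succ i ih =>
        intro hi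
        rw [hAstep i (by omega), ih (by omega), hPlsucc]
        simp only [gaugeT_mul]
  -- the common positivity/integrality fact for the target of T'
  have hq0 : qs 0 = q := by rw [hqs 0, shiftPoly_zero]
  have hTgt : ∀ i, i < m → ∀ x y, Intg (qs i) ((gaugeT phi T' A) x y) := by
    intro i him x y
    have hord : 0 ≤ matOrdAt (qs i) (gaugeT phi T' A) := by
      rcases Nat.eq_zero_or_pos i with h0 | hpos
      · rw [h0, hq0]; exact hT'q
      · refine le_trans ?_ (hT'p (qs i) (hqirr i))
        rw [matOrdAt_nonneg_iff]
        intro a b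
        rw [ordAt_nonneg_iff (hqirr i)]
        intro hdvd
        have hdm : qs i ∣ denMat A := by
          refine dvd_trans hdvd ?_
          unfold denMat
          have h1 : (A a b).denom ∣ ∏ j, (A a j).denom :=
            Finset.dvd_prod_of_mem _ (Finset.mem_univ b)
          have h2 : (∏ j, (A a j).denom) ∣ ∏ x, ∏ j, (A x j).denom :=
            Finset.dvd_prod_of_mem (fun x => ∏ j, (A x j).denom) (Finset.mem_univ a)
          exact h1.trans h2
        have hno := (hmin 0 (by omega)).2 i hpos
        rw [hq0, hA0, ← hqs i] at hno
        exact hno hdm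
    exact (ordAt_nonneg_iff (hqirr i) _).mp ((matOrdAt_nonneg_iff _ _).mp hord x y)
  -- main induction
  have main : ∀ i, i ≤ m → ∃ U : Matrix (Fin d) (Fin d) (Polynomial ↥Cs),
      (U.map am).det ≠ 0 ∧ T' = Pl i * U := by
    intro i
    induction i with
    | zero => exact fun _ => ⟨T', hT'det, by rw [hPl0, Matrix.one_mul]⟩
    | succ i ih =>
        intro hi
        have him : i < m := by omega
        obtain ⟨U, hUdet, hTU⟩ := ih (by omega)
        have hq' : Irreducible (qs i) := hqirr i
        set B := gaugeT phi (S i) (Aseq i) with hBdef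
        have hSd : IsUnit (S i).det := hS i him
        set Sv := (S i)⁻¹ with hSvdef
        have hSS : S i * Sv = 1 := Matrix.mul_nonsing_inv _ hSd
        set V := Sv * U with hVdef
        have hUV : U = S i * V := by
          rw [hVdef, ← Matrix.mul_assoc, hSS, Matrix.one_mul]
        have hmapSS : (S i).map am * Sv.map am = 1 := by
          rw [← mp_mul, hSS, mp_one]
        have hSvdet : ((Sv.map am)).det ≠ 0 := by
          intro h0
          have h1 := congrArg Matrix.det hmapSS
          rw [Matrix.det_mul, h0, mul_zero, Matrix.det_one] at h1
          exact one_ne_zero h1.symm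
        have hVdet : (V.map am).det ≠ 0 := by
          rw [hVdef, ham, mp_mul, Matrix.det_mul]
          exact mul_ne_zero hSvdet hUdet
        have hgauge : gaugeT phi V B = gaugeT phi T' A := by
          rw [hBdef, ← gaugeT_mul, ← hUV, hAseq i him.le, ← gaugeT_mul, ← hTU]
        have hCint : ∀ x y, Intg (qs i) ((gaugeT phi V B) x y) := by
          rw [hgauge]; exact hTgt i him
        have hBord : ∀ x y, ((-(n i : ℤ) : ℤ) : WithTop ℤ) ≤ ordAt (qs i) (B x y) := by
          intro x y
          rw [← hstageord i him]
          exact matOrdAt_le_entry _ _ x y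
        -- n i is positive
        have hn1 : 0 < n i := by
          by_contra hn0
          have hn0' : (n i : ℤ) = 0 := by omega
          have hBint : ∀ x y, Intg (qs i) (B x y) := by
            intro x y
            have h1 := hBord x y
            rw [hn0'] at h1
            exact (ordAt_nonneg_iff hq' _).mp (by simpa using h1)
          have hmpSunit : IsUnit ((S i).map am).det := by
            rw [ham, det_map_algebraMap]; exact hSd.map _
          have hmpSinv : (S i).map am * ((S i).map am)⁻¹ = 1 :=
            Matrix.mul_nonsing_inv _ hmpSunit
          have hAi : ((S i).map am).map ⇑phi * B * Sv.map am = Aseq i := by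
            rw [hBdef]
            unfold gaugeT
            rw [← ham]
            simp only [← Matrix.mul_assoc]
            rw [← phimat_mul, hmpSinv, phimat_one, Matrix.one_mul, Matrix.mul_assoc,
              hmapSS, Matrix.mul_one]
          have hAint : ∀ x y, Intg (qs i) (Aseq i x y) := by
            rw [← hAi]
            refine intg_matmul3 hq' _ _ _ ?_ hBint ?_
            · intro x y
              rw [Matrix.map_apply, Matrix.map_apply, ham, hphi]
              exact intg_algebraMap hq' _
            · intro x y
              rw [Matrix.map_apply]
              exact intg_algebraMap hq' _
          obtain ⟨hdvd, -⟩ := hmin i him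
          unfold denMat at hdvd
          obtain ⟨a, -, ha⟩ := (irred_prime hq').exists_mem_finset_dvd hdvd
          obtain ⟨b, -, hb⟩ := (irred_prime hq').exists_mem_finset_dvd ha
          exact hAint a b hb
        -- rows of V are divisible by qs i
        have hdl : ∀ x y : Fin d, (x : ℕ) < r i → qs i ∣ V x y := by
          refine key_rows phi hphi hq' hn1 B hBord ?_ ?_ V hVdet hCint
          · exact fun x y hy => hstagecol i him x y hy
          · exact hstagerank i him
        choose W hW using fun (x y : Fin d) (h : (x : ℕ) < r i) => hdl x y h
        set Wm : Matrix (Fin d) (Fin d) (Polynomial ↥Cs) :=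
          Matrix.of (fun x y => if h : (x : ℕ) < r i then W x y h else V x y) with hWm
        have hVDW : V = D i * Wm := by
          refine Matrix.ext fun x y => ?_
          rw [hD i him, Matrix.diagonal_mul]
          by_cases h : (x : ℕ) < r i
          · rw [if_pos h, hWm, Matrix.of_apply, dif_pos h]
            exact hW x y h
          · rw [if_neg h, hWm, Matrix.of_apply, dif_neg h, one_mul]
        have hVno : V.det ≠ 0 := by
          intro h0
          apply hVdet
          rw [ham, det_map_algebraMap, h0, map_zero]
        have hDno : (D i).det ≠ 0 := by
          rw [hD i him, Matrix.det_diagonal]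
          refine Finset.prod_ne_zero_iff.mpr fun x _ => ?_
          split_ifs
          · exact hq'.ne_zero
          · exact one_ne_zero
        have hWno : Wm.det ≠ 0 := by
          intro h0
          apply hVno
          rw [hVDW, Matrix.det_mul, h0, mul_zero]
        have hWdet : (Wm.map am).det ≠ 0 := by
          rw [ham, det_map_algebraMap]
          exact RatFunc.algebraMap_ne_zero hWno
        refine ⟨Wm, hWdet, ?_⟩
        rw [hPlsucc, hTU, hUV, hVDW]
        simp only [Matrix.mul_assoc]
  obtain ⟨U, h1, h2⟩ := main m le_rfl
  exact ⟨U, h1, h2⟩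

end
end
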